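/- arXiv:2005.10484 — 6 statements merged into one kernel-verified Lean document; each statement's English description precedes it below -/
import Mathlib

section
/- For every integer m ≥ 1 and every real t > 0, the probability that the adversary tree reaches depth m by time t satisfies P(D_0(t) ≥ m) = P(S*_m ≤ t) ≤ (e·λ_a·t/m)^m. -/
open MeasureTheory ProbabilityTheory Filter

namespace BRW

/-- Vertices at level `k + 1` of the infinite tree: tuples `(i_1, …, i_{k+1})`
of positive integers. -/
abbrev Vertex (k : ℕ) := Fin (k + 1) → ℕ+

/-- All vertices of the infinite tree (levels `1, 2, …`). -/
abbrev VertexAll := Σ k : ℕ, Vertex k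

/-- The tuple `(v_1, …, v_j, l)`: the `l`-th sibling of the ancestor of `v` at level `j + 1`. -/
def sibling {k : ℕ} (v : Vertex k) (j : Fin (k + 1)) (l : ℕ+) : Vertex j.val :=
  fun a => if h : (a : ℕ) < (j : ℕ) then v ⟨a, h.trans j.isLt⟩ else l

/-- The appearance time `S_v = ∑_{j ≤ k} W_{v^j}` of a vertex `v`, where
`W_{v^j} = ∑_{l ≤ i_j} E_{(i_1, …, i_{j-1}, l)}`. -/
noncomputable def S {Ω : Type*} (E : VertexAll → Ω → ℝ) {k : ℕ} (v : Vertex k) (ω : Ω) : ℝ :=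
  ∑ j : Fin (k + 1), ∑ l ∈ Finset.range (v j : ℕ),
    E ⟨j.val, sibling v j ⟨l + 1, l.succ_pos⟩⟩ ω

/-- `S*_m`: the first time the adversary tree reaches depth `m` (with `S*_0 = 0`). -/
noncomputable def Sstar {Ω : Type*} (E : VertexAll → Ω → ℝ) : ℕ → Ω → ℝ
  | 0 => fun _ => 0
  | (k + 1) => fun ω => ⨅ v : Vertex k, S E v ω

/-- `D_0(t)`: the depth of the adversary tree at time `t`. -/
noncomputable def D0 {Ω : Type*} (E : VertexAll → Ω → ℝ) (t : ℝ) (ω : Ω) : ℕ :=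
  sSup {m : ℕ | Sstar E m ω ≤ t}

end BRW

open BRW

/-!
A vertex `v` at depth `m` is born at time `S_v`, a sum of `∑ⱼ vⱼ` distinct independent `Exp(λ)`
clocks, so `E[e^{-θ S_v}] = (λ/(λ+θ))^{∑ⱼ vⱼ}`; summing these geometric series over `v ∈ ℕ+^m`
gives the first moment `E[∑_v e^{-θ S_v}] = (λ/θ)^m`. On `{S*_m ≤ t}` that sum is at least
`e^{-θt}`, so Markov's inequality gives `P(S*_m ≤ t) ≤ e^{θt} (λ/θ)^m`, and `θ = m/t` gives
`(eλt/m)^m`. With `θ = 2λ` the same bound shows that almost surely `S*_n > t` for some `n`; as the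
clocks are almost surely nonnegative, `n ↦ S*_n` is nondecreasing, hence `D_0(t) ≥ m ↔ S*_m ≤ t`
almost surely.
-/

open Real Topology
open scoped ENNReal

lemma expMeasure_eq_withDensity (r : ℝ) : expMeasure r = volume.withDensity (exponentialPDF r) :=
  rfl

lemma measurable_exponentialPDF (r : ℝ) : Measurable (exponentialPDF r) :=
  (measurable_exponentialPDFReal r).ennreal_ofReal

lemma ae_nonneg_expMeasure (r : ℝ) : ∀ᵐ x ∂expMeasure r, 0 ≤ x := by
  rw [ae_iff]
  simp only [not_le]
  rw [Set.Iio_def, expMeasure_eq_withDensity, withDensity_apply _ measurableSet_Iio]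
  exact lintegral_exponentialPDF_of_nonpos le_rfl

lemma lintegral_exp_neg_mul_expMeasure {r θ : ℝ} (hr : 0 < r) (hrθ : 0 < r + θ) :
    ∫⁻ x, ENNReal.ofReal (exp (-(θ * x))) ∂expMeasure r = ENNReal.ofReal (r / (r + θ)) := by
  have tilt : ∀ x, exponentialPDF r x * ENNReal.ofReal (exp (-(θ * x))) =
      ENNReal.ofReal (r / (r + θ)) * exponentialPDF (r + θ) x := by
    intro x
    rcases lt_or_ge x 0 with hx | hx
    · simp [exponentialPDF_of_neg hx]
    · rw [exponentialPDF_of_nonneg hx, exponentialPDF_of_nonneg hx,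
        ← ENNReal.ofReal_mul (by positivity), ← ENNReal.ofReal_mul (by positivity)]
      congr 1
      field_simp
      rw [← exp_add]
      ring_nf
  rw [expMeasure_eq_withDensity,
    lintegral_withDensity_eq_lintegral_mul _ (measurable_exponentialPDF r) (by fun_prop)]
  simp only [Pi.mul_apply, tilt, lintegral_const_mul _ (measurable_exponentialPDF _)]
  rw [lintegral_exponentialPDF_eq_one hrθ, mul_one]

lemma ENNReal.tsum_pi_fin_prod {α : Type*} (f : α → ℝ≥0∞) (n : ℕ) :
    ∑' v : Fin n → α, ∏ j, f (v j) = (∑' a, f a) ^ n := by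
  induction n with
  | zero => simp
  | succ n ih =>
    rw [← (Fin.consEquiv fun _ => α).tsum_eq, ENNReal.tsum_prod']
    simp [Fin.consEquiv, Fin.prod_univ_succ, ENNReal.tsum_mul_left, ENNReal.tsum_mul_right, ih,
      pow_succ']

lemma ENNReal.tsum_pnat_pow (x : ℝ≥0∞) : ∑' n : ℕ+, x ^ (n : ℕ) = x * (1 - x)⁻¹ :=
  (tsum_pnat_eq_tsum_succ (f := fun n => x ^ n)).trans (ENNReal.tsum_geometric_add_one x)

lemma ENNReal.ofReal_div_add_mul_one_sub_inv {a θ : ℝ} (ha : 0 < a) (hθ : 0 < θ) :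
    ENNReal.ofReal (a / (a + θ)) * (1 - ENNReal.ofReal (a / (a + θ)))⁻¹ =
      ENNReal.ofReal (a / θ) := by
  have hsub : 1 - a / (a + θ) = θ / (a + θ) := by field_simp; ring
  rw [← ENNReal.ofReal_one, ← ENNReal.ofReal_sub _ (by positivity), hsub,
    ← ENNReal.ofReal_inv_of_pos (by positivity), ← ENNReal.ofReal_mul (by positivity)]
  congr 1
  field_simp

lemma Monotone.le_sSup_setOf_le_iff {α : Type*} [LinearOrder α] {f : ℕ → α} (hf : Monotone f)
    {t : α} (h0 : f 0 ≤ t) (hN : ∃ N, t < f N) (m : ℕ) : m ≤ sSup {n | f n ≤ t} ↔ f m ≤ t := by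
  obtain ⟨N, hN⟩ := hN
  have hbdd : BddAbove {n | f n ≤ t} :=
    ⟨N, fun n hn => le_of_not_gt fun hNn => (hN.trans_le (hf hNn.le)).not_ge hn⟩
  exact ⟨fun h => (hf h).trans (Nat.sSup_mem ⟨0, h0⟩ hbdd), fun h => le_csSup hbdd h⟩

namespace BRW

open Finset

variable {Ω : Type*} {E : VertexAll → Ω → ℝ}

def clockIndex {k : ℕ} (v : Vertex k) (p : Σ _ : Fin (k + 1), ℕ) : VertexAll :=
  ⟨p.1, sibling v p.1 ⟨p.2 + 1, p.2.succ_pos⟩⟩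

lemma clockIndex_injective {k : ℕ} (v : Vertex k) : Function.Injective (clockIndex v) := by
  rintro ⟨j, l⟩ ⟨j', l'⟩ h
  obtain ⟨hj, hsib⟩ := Sigma.mk.inj_iff.mp h
  obtain rfl : j = j' := Fin.ext hj
  simpa [sibling] using congrArg Subtype.val (congrFun (eq_of_heq hsib) (Fin.last j))

def clocks {k : ℕ} (v : Vertex k) : Finset VertexAll :=
  (univ.sigma fun j => range (v j)).image (clockIndex v)

lemma S_eq_sum_clocks (E : VertexAll → Ω → ℝ) {k : ℕ} (v : Vertex k) (ω : Ω) :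
    S E v ω = ∑ u ∈ clocks v, E u ω := by
  rw [clocks, sum_image fun _ _ _ _ h => clockIndex_injective v h, sum_sigma]
  rfl

lemma card_clocks {k : ℕ} (v : Vertex k) : #(clocks v) = ∑ j, (v j : ℕ) := by
  simp [clocks, card_image_of_injective _ (clockIndex_injective v)]

lemma measurable_S [MeasurableSpace Ω] (hmeas : ∀ u, Measurable (E u)) {k : ℕ} (v : Vertex k) :
    Measurable (S E v) := by
  simp_rw [funext (S_eq_sum_clocks E v)]
  exact measurable_sum _ fun u _ => hmeas u

section Nonneg

variable {ω : Ω} (hE : ∀ u, 0 ≤ E u ω)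
include hE

lemma S_nonneg {k : ℕ} (v : Vertex k) : 0 ≤ S E v ω :=
  sum_nonneg fun _ _ => sum_nonneg fun _ _ => hE _

lemma bddBelow_range_S (k : ℕ) : BddBelow (Set.range fun v : Vertex k => S E v ω) :=
  ⟨0, by rintro _ ⟨v, rfl⟩; exact S_nonneg hE v⟩

lemma S_init_le {k : ℕ} (v : Vertex (k + 1)) : S E (Fin.init v) ω ≤ S E v ω := by
  rw [S, S, Fin.sum_univ_castSucc (n := k + 1)]
  exact le_add_of_nonneg_right (sum_nonneg fun _ _ => hE _)

lemma Sstar_monotone : Monotone fun n => Sstar E n ω := by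
  refine monotone_nat_of_le_succ fun n => ?_
  cases n with
  | zero => exact le_ciInf fun v => S_nonneg hE v
  | succ k =>
    exact le_ciInf fun v => (ciInf_le (bddBelow_range_S hE k) (Fin.init v)).trans (S_init_le hE v)

end Nonneg

lemma exp_neg_mul_le_tsum_of_Sstar_le {ω : Ω} (hE : ∀ u, 0 ≤ E u ω) {θ t : ℝ} (hθ : 0 ≤ θ)
    {k : ℕ} (h : Sstar E (k + 1) ω ≤ t) :
    ENNReal.ofReal (exp (-(θ * t))) ≤ ∑' v : Vertex k, ENNReal.ofReal (exp (-(θ * S E v ω))) := by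
  have hanti : Antitone fun x => ENNReal.ofReal (exp (-(θ * x))) := fun x y hxy =>
    ENNReal.ofReal_le_ofReal (exp_le_exp.2 (by nlinarith))
  have hcont : Continuous fun x => ENNReal.ofReal (exp (-(θ * x))) :=
    ENNReal.continuous_ofReal.comp (by fun_prop)
  calc ENNReal.ofReal (exp (-(θ * t)))
      ≤ ENNReal.ofReal (exp (-(θ * Sstar E (k + 1) ω))) := hanti h
    _ = ⨆ v : Vertex k, ENNReal.ofReal (exp (-(θ * S E v ω))) :=
        hanti.map_ciInf_of_continuousAt hcont.continuousAt (bddBelow_range_S hE k)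
    _ ≤ _ := iSup_le ENNReal.le_tsum

section Probability

variable [MeasurableSpace Ω] {P : Measure Ω} {la θ : ℝ}
  (hmeas : ∀ u, Measurable (E u)) (hdist : ∀ u, P.map (E u) = expMeasure la)
include hmeas hdist

lemma ae_forall_clock_nonneg : ∀ᵐ ω ∂P, ∀ u, 0 ≤ E u ω :=
  ae_all_iff.2 fun u =>
    ae_of_ae_map (hmeas u).aemeasurable (by rw [hdist u]; exact ae_nonneg_expMeasure la)

lemma lintegral_exp_neg_mul_clock (hla : 0 < la) (hθ : 0 < la + θ) (u : VertexAll) :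
    ∫⁻ ω, ENNReal.ofReal (exp (-(θ * E u ω))) ∂P = ENNReal.ofReal (la / (la + θ)) := by
  rw [← lintegral_map (f := fun x => ENNReal.ofReal (exp (-(θ * x)))) (by fun_prop) (hmeas u),
    hdist u, lintegral_exp_neg_mul_expMeasure hla hθ]

variable (hindep : iIndepFun E P)
include hindep

lemma lintegral_exp_neg_mul_S (hla : 0 < la) (hθ : 0 < la + θ) {k : ℕ} (v : Vertex k) :
    ∫⁻ ω, ENNReal.ofReal (exp (-(θ * S E v ω))) ∂P =
      ENNReal.ofReal (la / (la + θ)) ^ ∑ j, (v j : ℕ) := by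
  have hprod (ω : Ω) : ENNReal.ofReal (exp (-(θ * S E v ω))) =
      ∏ u ∈ clocks v, ENNReal.ofReal (exp (-(θ * E u ω))) := by
    rw [S_eq_sum_clocks, mul_sum, ← sum_neg_distrib, exp_sum,
      ENNReal.ofReal_prod_of_nonneg fun _ _ => (exp_pos _).le]
  simp_rw [hprod]
  rw [lintegral_prod_eq_prod_lintegral_of_indepFun _
    (fun u ω => ENNReal.ofReal (exp (-(θ * E u ω))))
    (hindep.comp (fun _ x => ENNReal.ofReal (exp (-(θ * x)))) fun _ => by fun_prop)
    fun u => by fun_prop]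
  simp [lintegral_exp_neg_mul_clock hmeas hdist hla hθ, card_clocks]

lemma lintegral_tsum_exp_neg_mul_S (hla : 0 < la) (hθ : 0 < θ) (k : ℕ) :
    ∫⁻ ω, ∑' v : Vertex k, ENNReal.ofReal (exp (-(θ * S E v ω))) ∂P =
      ENNReal.ofReal (la / θ) ^ (k + 1) := by
  rw [lintegral_tsum fun v => (measurable_S hmeas v).aemeasurable.const_mul θ
    |>.neg |>.exp |>.ennreal_ofReal (f := fun ω => exp (-(θ * S E v ω)))]
  simp_rw [lintegral_exp_neg_mul_S hmeas hdist hindep hla (by linarith), ← prod_pow_eq_pow_sum]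
  rw [ENNReal.tsum_pi_fin_prod fun n : ℕ+ => ENNReal.ofReal (la / (la + θ)) ^ (n : ℕ),
    ENNReal.tsum_pnat_pow, ENNReal.ofReal_div_add_mul_one_sub_inv hla hθ]

lemma measure_Sstar_le_le_exp_mul (hla : 0 < la) (hθ : 0 < θ) (k : ℕ) (t : ℝ) :
    P {ω | Sstar E (k + 1) ω ≤ t} ≤
      ENNReal.ofReal (exp (θ * t)) * ENNReal.ofReal (la / θ) ^ (k + 1) := by
  set Z : Ω → ℝ≥0∞ := fun ω => ∑' v : Vertex k, ENNReal.ofReal (exp (-(θ * S E v ω)))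
  have hZ : Measurable Z := Measurable.tsum fun v =>
    ((measurable_S hmeas v).const_mul θ).neg.exp.ennreal_ofReal
  calc P {ω | Sstar E (k + 1) ω ≤ t}
      ≤ P {ω | ENNReal.ofReal (exp (-(θ * t))) ≤ Z ω} := measure_mono_ae <| by
        filter_upwards [ae_forall_clock_nonneg hmeas hdist] with ω hE h
        exact exp_neg_mul_le_tsum_of_Sstar_le hE hθ.le h
    _ ≤ (∫⁻ ω, Z ω ∂P) / ENNReal.ofReal (exp (-(θ * t))) :=
        meas_ge_le_lintegral_div hZ.aemeasurable (ENNReal.ofReal_pos.2 (exp_pos _)).ne'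
          ENNReal.ofReal_ne_top
    _ = _ := by
        rw [lintegral_tsum_exp_neg_mul_S hmeas hdist hindep hla hθ, ENNReal.div_eq_inv_mul,
          ← ENNReal.ofReal_inv_of_pos (exp_pos _), ← exp_neg, neg_neg]

lemma measure_Sstar_le_le_pow (hla : 0 < la) {t : ℝ} (ht : 0 < t) (m : ℕ) :
    P {ω | Sstar E m ω ≤ t} ≤ ENNReal.ofReal ((exp 1 * la * t / m) ^ m) := by
  have := hindep.isProbabilityMeasure
  rcases m with _ | k
  · simpa using prob_le_one
  · refine (measure_Sstar_le_le_exp_mul hmeas hdist hindep hla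
      (θ := ((k + 1 : ℕ) : ℝ) / t) (by positivity) k t).trans_eq ?_
    rw [← ENNReal.ofReal_pow (by positivity), ← ENNReal.ofReal_mul (exp_pos _).le,
      div_mul_cancel₀ _ ht.ne', ← mul_one ((k + 1 : ℕ) : ℝ), exp_nat_mul, ← mul_pow]
    congr 2
    field_simp

lemma ae_exists_lt_Sstar (hla : 0 < la) (t : ℝ) : ∀ᵐ ω ∂P, ∃ n, t < Sstar E n ω := by
  have hhalf : la / (2 * la) = 1 / 2 := by field_simp
  have hbound (k : ℕ) : P {ω | ∀ n, Sstar E n ω ≤ t} ≤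
      ENNReal.ofReal (exp (2 * la * t)) * ENNReal.ofReal (1 / 2) ^ (k + 1) := by
    rw [← hhalf]
    exact (measure_mono fun ω (h : ∀ n, Sstar E n ω ≤ t) => h (k + 1)).trans
      (measure_Sstar_le_le_exp_mul hmeas hdist hindep hla (by positivity) k t)
  have hlim : Tendsto (fun k : ℕ => ENNReal.ofReal (exp (2 * la * t)) *
      ENNReal.ofReal (1 / 2) ^ (k + 1)) atTop (𝓝 0) := by
    simpa using ENNReal.Tendsto.const_mul ((ENNReal.tendsto_pow_atTop_nhds_zero_of_lt_one
      (by norm_num)).comp (tendsto_add_atTop_nat 1)) (Or.inr ENNReal.ofReal_ne_top)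
  simp only [ae_iff, not_exists, not_lt]
  exact le_antisymm (ge_of_tendsto' hlim hbound) bot_le

end Probability

end BRW

theorem adversary_tree_depth_tail_bound_general
    {Ω : Type*} [MeasurableSpace Ω] (P : Measure Ω)
    (lambda_a : ℝ) (hla : 0 < lambda_a)
    (E : VertexAll → Ω → ℝ)
    (hmeas : ∀ v, Measurable (E v))
    (hdist : ∀ v, P.map (E v) = expMeasure lambda_a)
    (hindep : iIndepFun E P)
    (m : ℕ) (t : ℝ) (ht : 0 < t) :
    P {ω | m ≤ D0 E t ω} = P {ω | Sstar E m ω ≤ t} ∧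
      P {ω | Sstar E m ω ≤ t} ≤
        ENNReal.ofReal ((Real.exp 1 * lambda_a * t / m) ^ m) := by
  refine ⟨measure_congr ?_, measure_Sstar_le_le_pow hmeas hdist hindep hla ht m⟩
  filter_upwards [ae_forall_clock_nonneg hmeas hdist, ae_exists_lt_Sstar hmeas hdist hindep hla t]
    with ω hE hN
  exact propext ((Sstar_monotone hE).le_sSup_setOf_le_iff ht.le hN m)

/-- For every `m ≥ 1` and `t > 0`, the probability that the adversary tree
reaches depth `m` by time `t` satisfies
`P(D_0(t) ≥ m) = P(S*_m ≤ t) ≤ (e λ_a t / m) ^ m`. -/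
theorem adversary_tree_depth_tail_bound
    {Ω : Type*} [MeasurableSpace Ω] (P : Measure Ω) [IsProbabilityMeasure P]
    (lambda_a : ℝ) (hla : 0 < lambda_a)
    (E : VertexAll → Ω → ℝ)
    (hmeas : ∀ v, Measurable (E v))
    (hdist : ∀ v, P.map (E v) = expMeasure lambda_a)
    (hindep : iIndepFun E P)
    (m : ℕ) (hm : 1 ≤ m) (t : ℝ) (ht : 0 < t) :
    P {ω | m ≤ D0 E t ω} = P {ω | Sstar E m ω ≤ t} ∧
      P {ω | Sstar E m ω ≤ t} ≤
        ENNReal.ofReal ((Real.exp 1 * lambda_a * t / m) ^ m) :=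
  adversary_tree_depth_tail_bound_general P lambda_a hla E hmeas hdist hindep m t ht
end

section
/- The increments (T_{d+1} − T_d − Δ)_{d≥1} form an i.i.d. sequence of exponential random variables with rate λ_h. -/
open MeasureTheory ProbabilityTheory Filter

namespace HonestTree

/-- Honest arrival times `τ_i = Y_1 + ⋯ + Y_i` (as `Y 0 + ⋯ + Y (i-1)`). -/
def tau {Ω : Type*} (Y : ℕ → Ω → ℝ) (i : ℕ) (ω : Ω) : ℝ :=
  ∑ j ∈ Finset.range i, Y j ω

end HonestTree

open HonestTree

/-!
If `T_d = τ_m`, then `T_{d+1} = τ_{m+K}`, where `K` is the number of interarrival times after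
`τ_m` needed for their sum to exceed `Δ`. So `T_{d+1} - T_d - Δ` is the overshoot over `Δ` of the
partial sums of `(Y_{m+1}, Y_{m+2}, …)`, and the next increment arises in the same way from the
sequence restarted after these `K` terms. As `K` is a stopping time of an i.i.d. sequence, the
restarted sequence is again i.i.d. and independent of the terms before it (strong Markov
property). For exponential interarrival times the overshoot is moreover `Exp(λ)`: on the event
that the first `j` partial sums stay below `Δ`, with `s` the last of them, the overshoot at step
`j + 1` is the excess of an independent exponential variable over `Δ - s`, which is exponential by
memorylessness. Iterating the pair (overshoot, restart) shows that the successive overshoots are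
i.i.d. `Exp(λ)`.
-/

open Finset

namespace MeasureTheory

lemma measure_eq_tsum_inter_preimage_singleton {β : Type*} [MeasurableSpace β] (μ : Measure β)
    {f : β → ℕ} (hf : Measurable f) (s : Set β) : μ s = ∑' n, μ (f ⁻¹' {n} ∩ s) := by
  have h := tsum_measure_preimage_singleton (μ := μ.restrict s) Set.countable_univ
    fun n _ => hf (measurableSet_singleton n)
  rw [Set.preimage_univ, Measure.restrict_apply_univ,
    tsum_univ fun n => μ.restrict s (f ⁻¹' {n})] at h
  simp_rw [Measure.restrict_apply (hf (measurableSet_singleton _))] at h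
  exact h.symm

end MeasureTheory

namespace ProbabilityTheory

lemma iIndepFun_and_map_eq_of_map_eq_infinitePi {Ω ι : Type*} {mΩ : MeasurableSpace Ω}
    {P : Measure Ω} [IsProbabilityMeasure P] {𝓧 : ι → Type*} {m𝓧 : ∀ i, MeasurableSpace (𝓧 i)}
    {X : ∀ i, Ω → 𝓧 i} {μ : ∀ i, Measure (𝓧 i)} [∀ i, IsProbabilityMeasure (μ i)]
    (hX : AEMeasurable (fun ω i => X i ω) P)
    (hlaw : P.map (fun ω i => X i ω) = Measure.infinitePi μ) :
    iIndepFun X P ∧ ∀ i, P.map (X i) = μ i := by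
  have hmarg (i : ι) : P.map (X i) = μ i := by
    rw [← Measure.infinitePi_map_eval μ i, ← hlaw,
      AEMeasurable.map_map_of_aemeasurable (measurable_pi_apply i).aemeasurable hX]
    rfl
  refine ⟨(iIndepFun_iff_map_fun_eq_infinitePi_map₀ hX).2 ?_, hmarg⟩
  rw [hlaw, funext hmarg]

end ProbabilityTheory

namespace HonestTree

section Sequences

variable {α : Type*}

def shift (k : ℕ) (y : ℕ → α) : ℕ → α := fun j => y (k + j)

def truncate [Zero α] (k : ℕ) (y : ℕ → α) : ℕ → α := fun j => if j < k then y j else 0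

lemma shift_shift (m k : ℕ) (y : ℕ → α) : shift k (shift m y) = shift (m + k) y := by
  funext j
  simp only [shift, add_assoc]

@[fun_prop]
lemma measurable_shift [MeasurableSpace α] (k : ℕ) : Measurable (shift (α := α) k) :=
  measurable_pi_lambda _ fun j => measurable_pi_apply (k + j)

@[fun_prop]
lemma measurable_truncate [MeasurableSpace α] [Zero α] (k : ℕ) : Measurable (truncate (α := α) k) :=
  measurable_pi_lambda _ fun j => by
    by_cases hj : j < k <;> simp only [truncate, hj, if_true, if_false] <;> fun_prop

lemma sum_range_add_shift [AddCommMonoid α] (y : ℕ → α) (m k : ℕ) :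
    ∑ j ∈ range (m + k), y j = ∑ j ∈ range m, y j + ∑ j ∈ range k, shift m y j :=
  sum_range_add y m k

lemma sum_range_truncate [AddCommMonoid α] {y : ℕ → α} {j k : ℕ} (hjk : j ≤ k) :
    ∑ i ∈ range j, truncate k y i = ∑ i ∈ range j, y i :=
  sum_congr rfl fun _ hi => if_pos ((mem_range.1 hi).trans_le hjk)

end Sequences

section Passage

variable (Δ : ℝ)

/-- When no partial sum exceeds `Δ` this is `sInf ∅ = 0`, which for `0 ≤ Δ` is never a genuine
passage index. -/
noncomputable def passageIndex (y : ℕ → ℝ) : ℕ := sInf {k | Δ < ∑ j ∈ range k, y j}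

noncomputable def overshoot (y : ℕ → ℝ) : ℝ := ∑ j ∈ range (passageIndex Δ y), y j - Δ

noncomputable def restart (y : ℕ → ℝ) : ℕ → ℝ := shift (passageIndex Δ y) y

noncomputable def overshoots (y : ℕ → ℝ) (n : ℕ) : ℝ := overshoot Δ ((restart Δ)^[n] y)

variable {Δ} {y : ℕ → ℝ} {k : ℕ}

lemma passageIndex_eq_iff (hk : k ≠ 0) :
    passageIndex Δ y = k ↔ Δ < ∑ j ∈ range k, y j ∧ ∀ j < k, ∑ i ∈ range j, y i ≤ Δ := by
  have hleast : passageIndex Δ y = k ↔ IsLeast {k | Δ < ∑ j ∈ range k, y j} k := by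
    refine ⟨fun h => ?_, fun h => h.csInf_eq⟩
    have hne : {k | Δ < ∑ j ∈ range k, y j}.Nonempty := by
      by_contra hemp
      rw [Set.not_nonempty_iff_eq_empty] at hemp
      exact hk (h ▸ by rw [passageIndex, hemp, Nat.sInf_empty])
    exact h ▸ ⟨Nat.sInf_mem hne, fun j hj => Nat.sInf_le hj⟩
  simp only [hleast, IsLeast, lowerBounds, Set.mem_ofPred_eq, and_congr_right_iff]
  exact fun _ => ⟨fun h j hj => not_lt.1 fun hΔ => (h hΔ).not_gt hj,
    fun h j hΔ => not_lt.1 fun hj => (h j hj).not_gt hΔ⟩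

lemma passageIndex_eq_zero_iff (hΔ : 0 ≤ Δ) :
    passageIndex Δ y = 0 ↔ ∀ k, ∑ j ∈ range k, y j ≤ Δ := by
  simp [passageIndex, Nat.sInf_eq_zero, hΔ, Set.eq_empty_iff_forall_notMem]

lemma overshoot_of_passageIndex_eq (h : passageIndex Δ y = k) :
    overshoot Δ y = ∑ j ∈ range k, y j - Δ := by
  rw [overshoot, h]

lemma restart_of_passageIndex_eq (h : passageIndex Δ y = k) : restart Δ y = shift k y := by
  rw [restart, h]

lemma passageIndex_truncate_eq_iff (hk : k ≠ 0) :
    passageIndex Δ (truncate k y) = k ↔ passageIndex Δ y = k := by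
  simp +contextual only [passageIndex_eq_iff hk, sum_range_truncate le_rfl,
    sum_range_truncate (Nat.le_of_lt _)]

lemma overshoot_truncate (h : passageIndex Δ y = k) :
    overshoot Δ (truncate k y) = overshoot Δ y := by
  rcases eq_or_ne k 0 with rfl | hk
  · simp [overshoot, h, truncate]
  rw [overshoot_of_passageIndex_eq h, overshoot_of_passageIndex_eq
    ((passageIndex_truncate_eq_iff hk).2 h), sum_range_truncate le_rfl]

lemma measurableSet_passageIndex_eq (hk : k ≠ 0) :
    MeasurableSet {y : ℕ → ℝ | passageIndex Δ y = k} := by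
  simp_rw [passageIndex_eq_iff hk, Set.ofPred_and, Set.ofPred_forall]
  exact (measurableSet_lt measurable_const (by fun_prop)).inter
    (.iInter fun j => .iInter fun _ => measurableSet_le (by fun_prop) measurable_const)

@[fun_prop]
lemma measurable_passageIndex : Measurable (passageIndex Δ) := by
  refine measurable_to_countable' fun k => ?_
  rcases eq_or_ne k 0 with rfl | hk
  · have : passageIndex Δ ⁻¹' {0} = ⋂ k ≠ 0, {y | passageIndex Δ y = k}ᶜ := by
      ext y
      simp only [Set.mem_preimage, Set.mem_singleton_iff, Set.mem_iInter, Set.mem_compl_iff,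
        Set.mem_ofPred_eq]
      exact ⟨fun h k hk h' => hk (h' ▸ h), fun h => by_contra fun h' => h _ h' rfl⟩
    rw [this]
    exact .iInter fun k => .iInter fun hk => (measurableSet_passageIndex_eq hk).compl
  · exact measurableSet_passageIndex_eq hk

@[fun_prop]
lemma measurable_overshoot : Measurable (overshoot Δ) :=
  (measurable_from_prod_countable_left
    (f := fun p : (ℕ → ℝ) × ℕ => ∑ j ∈ range p.2, p.1 j - Δ) fun _ => by dsimp only; fun_prop).comp
    (measurable_id.prodMk measurable_passageIndex)

@[fun_prop]
lemma measurable_restart : Measurable (restart Δ) :=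
  (measurable_from_prod_countable_left (f := fun p : (ℕ → ℝ) × ℕ => shift p.2 p.1)
    fun _ => by dsimp only; fun_prop).comp (measurable_id.prodMk measurable_passageIndex)

@[fun_prop]
lemma measurable_overshoots : Measurable (overshoots Δ) :=
  measurable_pi_lambda _ fun n => measurable_overshoot.comp (measurable_restart.iterate n)

end Passage

section ProductMeasure

variable {α : Type*} [MeasurableSpace α] {μ : Measure α} [IsProbabilityMeasure μ]

lemma infinitePi_map_shift (k : ℕ) :
    (Measure.infinitePi fun _ : ℕ => μ).map (shift k) = Measure.infinitePi fun _ : ℕ => μ :=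
  Measure.map_infinitePi_infinitePi_of_inj (add_right_injective k)

lemma indepFun_truncate_shift [Zero α] (k : ℕ) :
    IndepFun (truncate k) (shift k) (Measure.infinitePi fun _ : ℕ => μ) := by
  let m : ℕ → MeasurableSpace (ℕ → α) := fun i => MeasurableSpace.comap (fun y => y i) ‹_›
  have hcoord : iIndep m (Measure.infinitePi fun _ : ℕ => μ) :=
    (iIndepFun_iff_iIndep _ _ _).1 <| iIndepFun_infinitePi (P := fun _ : ℕ => μ)
      (X := fun _ (x : α) => x) fun _ => measurable_id
  have hsplit := indep_iSup_of_disjoint (fun i => (measurable_pi_apply i).comap_le) hcoord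
    (S := Set.Iio k) (T := Set.Ici k) (Set.Iio_disjoint_Ici le_rfl)
  have heval {S : Set ℕ} {i : ℕ} (hi : i ∈ S) : Measurable[⨆ i ∈ S, m i] fun y => y i :=
    Measurable.of_comap_le (le_iSup₂ (f := fun i (_ : i ∈ S) => m i) i hi)
  rw [IndepFun_iff_Indep]
  refine indep_of_indep_of_le_right (indep_of_indep_of_le_left hsplit ?_) ?_
  · refine Measurable.comap_le (@measurable_pi_lambda _ _ _ (_) _ _ fun j => ?_)
    by_cases hj : j < k
    · simp only [truncate, hj, if_true]
      exact heval (S := Set.Iio k) hj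
    · simp only [truncate, hj, if_false]
      exact measurable_const
  · exact Measurable.comap_le (@measurable_pi_lambda _ _ _ (_) _ _ fun j =>
      heval (S := Set.Ici k) (Nat.le_add_right k j))

lemma infinitePi_map_truncate_shift [Zero α] (k : ℕ) :
    (Measure.infinitePi fun _ : ℕ => μ).map (fun y => (truncate k y, shift k y)) =
      ((Measure.infinitePi fun _ : ℕ => μ).map (truncate k)).prod
        (Measure.infinitePi fun _ : ℕ => μ) := by
  rw [(indepFun_truncate_shift k).map_prod_eq_prod_map_map (by fun_prop) (by fun_prop),
    infinitePi_map_shift]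

end ProductMeasure

section StrongMarkov

variable {μ : Measure ℝ} [IsProbabilityMeasure μ] {Δ : ℝ}

local notation "ν" => Measure.infinitePi fun _ : ℕ => μ

lemma infinitePi_passageIndex_inter_overshoot_inter_restart {k : ℕ} (hk : k ≠ 0) {A : Set ℝ}
    {B : Set (ℕ → ℝ)} (hA : MeasurableSet A) (hB : MeasurableSet B) :
    ν (passageIndex Δ ⁻¹' {k} ∩ (overshoot Δ ⁻¹' A ∩ restart Δ ⁻¹' B)) =
      ν (passageIndex Δ ⁻¹' {k} ∩ overshoot Δ ⁻¹' A) * ν B := by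
  set E := passageIndex Δ ⁻¹' {k} ∩ overshoot Δ ⁻¹' A
  have hEm : MeasurableSet E :=
    (measurableSet_passageIndex_eq hk).inter (measurable_overshoot hA)
  have hE : truncate k ⁻¹' E = E := by
    ext y
    simp only [E, Set.mem_inter_iff, Set.mem_preimage, Set.mem_singleton_iff,
      passageIndex_truncate_eq_iff hk]
    exact ⟨fun ⟨hK, hA⟩ => ⟨hK, overshoot_truncate hK ▸ hA⟩,
      fun ⟨hK, hA⟩ => ⟨hK, (overshoot_truncate hK).symm ▸ hA⟩⟩
  have hEB : passageIndex Δ ⁻¹' {k} ∩ (overshoot Δ ⁻¹' A ∩ restart Δ ⁻¹' B) =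
      (fun y => (truncate k y, shift k y)) ⁻¹' (E ×ˢ B) := by
    rw [Set.mk_preimage_prod, hE]
    ext y
    simp only [E, Set.mem_inter_iff, Set.mem_preimage, Set.mem_singleton_iff]
    exact ⟨fun ⟨hK, hA, hB⟩ => ⟨⟨hK, hA⟩, restart_of_passageIndex_eq hK ▸ hB⟩,
      fun ⟨⟨hK, hA⟩, hB⟩ => ⟨hK, hA, (restart_of_passageIndex_eq hK).symm ▸ hB⟩⟩
  rw [hEB, ← Measure.map_apply (by fun_prop) (hEm.prod hB), infinitePi_map_truncate_shift,
    Measure.prod_prod, Measure.map_apply (by fun_prop) hEm, hE]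

theorem infinitePi_map_overshoot_restart_eq_prod (hpass : ν (passageIndex Δ ⁻¹' {0}) = 0) :
    Measure.map (fun y => (overshoot Δ y, restart Δ y)) ν =
      (Measure.map (overshoot Δ) ν).prod ν := by
  refine (Measure.prod_eq fun A B hA hB => ?_).symm
  rw [Measure.map_apply (by fun_prop) (hA.prod hB), Measure.map_apply (by fun_prop) hA,
    Set.mk_preimage_prod, measure_eq_tsum_inter_preimage_singleton _ measurable_passageIndex,
    measure_eq_tsum_inter_preimage_singleton _ measurable_passageIndex (overshoot Δ ⁻¹' A),
    ← ENNReal.tsum_mul_right]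
  refine tsum_congr fun k => ?_
  rcases eq_or_ne k 0 with rfl | hk
  · rw [measure_mono_null Set.inter_subset_left hpass,
      measure_mono_null Set.inter_subset_left hpass, zero_mul]
  · exact infinitePi_passageIndex_inter_overshoot_inter_restart hk hA hB

lemma infinitePi_passageIndex_eq_zero (hΔ : 0 ≤ Δ) (hμ : ∀ᵐ x ∂μ, 0 ≤ x)
    (hlt : μ (Set.Iic Δ) < 1) :
    ν (passageIndex Δ ⁻¹' {0}) = 0 := by
  have hnonneg : ∀ᵐ y ∂ν, ∀ j, 0 ≤ y j := ae_all_iff.2 fun j =>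
    (measurePreserving_eval_infinitePi _ j).quasiMeasurePreserving.ae hμ
  have hbounded : ν {y | ∀ j, y j ≤ Δ} = 0 := by
    refine le_antisymm (ge_of_tendsto' (ENNReal.tendsto_pow_atTop_nhds_zero_of_lt_one hlt)
      fun n => ?_) bot_le
    calc ν {y | ∀ j, y j ≤ Δ} ≤ ν ((range n : Set ℕ).pi fun _ => Set.Iic Δ) :=
          measure_mono fun y hy j _ => hy j
      _ = μ (Set.Iic Δ) ^ n := by
          rw [Measure.infinitePi_pi _ fun _ _ => measurableSet_Iic, prod_const, card_range]
  refine measure_mono_null_ae ?_ hbounded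
  filter_upwards [hnonneg] with y hy hK j
  have hsums := (passageIndex_eq_zero_iff hΔ).1 hK (j + 1)
  rw [sum_range_succ] at hsums
  linarith [sum_nonneg fun i (_ : i ∈ range j) => hy i]

end StrongMarkov

section Exponential

variable {r : ℝ}

lemma expMeasure_Iic (hr : 0 < r) (x : ℝ) :
    expMeasure r (Set.Iic x) = ENNReal.ofReal (if 0 ≤ x then 1 - Real.exp (-(r * x)) else 0) := by
  have := isProbabilityMeasure_expMeasure hr
  rw [← ofReal_cdf, cdf_expMeasure_eq hr]

lemma ae_expMeasure_nonneg (hr : 0 < r) : ∀ᵐ x ∂expMeasure r, 0 ≤ x := by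
  simp only [ae_iff, not_le]
  exact measure_mono_null Set.Iio_subset_Iic_self (by simp [expMeasure_Iic hr])

lemma expMeasure_Iic_lt_one (hr : 0 < r) (x : ℝ) : expMeasure r (Set.Iic x) < 1 := by
  rw [expMeasure_Iic hr, ← ENNReal.ofReal_one, ENNReal.ofReal_lt_ofReal_iff one_pos]
  split_ifs
  · linarith [Real.exp_pos (-(r * x))]
  · exact one_pos

lemma expMeasure_memoryless (hr : 0 < r) {t : ℝ} (ht : 0 ≤ t) {A : Set ℝ}
    (hA : MeasurableSet A) :
    expMeasure r {x | t < x ∧ x - t ∈ A} =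
      ENNReal.ofReal (Real.exp (-(r * t))) * expMeasure r A := by
  have hpos : MeasurableSet (Set.Ioi 0 ∩ A) := measurableSet_Ioi.inter hA
  have hpre : {x | t < x ∧ x - t ∈ A} = (fun x => x - t) ⁻¹' (Set.Ioi 0 ∩ A) := by
    ext x
    simp
  have hdensity : ∀ s, MeasurableSet s → expMeasure r s = ∫⁻ x in s, exponentialPDF r x :=
    fun s hs => withDensity_apply _ hs
  have hpdf : Measurable (exponentialPDF r) := (measurable_exponentialPDFReal r).ennreal_ofReal
  calc expMeasure r {x | t < x ∧ x - t ∈ A}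
      = ∫⁻ x, (Set.Ioi 0 ∩ A).indicator (fun u => exponentialPDF r (u + t)) (x - t) := by
        rw [hpre, hdensity _ (measurable_sub_const t hpos), ← lintegral_indicator
          (measurable_sub_const t hpos)]
        refine lintegral_congr fun x => ?_
        rw [← Set.indicator_comp_right (fun x => x - t) (g := fun u => exponentialPDF r (u + t))]
        simp only [Function.comp_def, sub_add_cancel]
    _ = ∫⁻ u in Set.Ioi 0 ∩ A, exponentialPDF r (u + t) := by
        rw [lintegral_sub_right_eq_self, lintegral_indicator hpos]
    _ = ∫⁻ u in Set.Ioi 0 ∩ A, ENNReal.ofReal (Real.exp (-(r * t))) * exponentialPDF r u := by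
        refine setLIntegral_congr_fun hpos fun u hu => ?_
        have hu0 : 0 < u := hu.1
        rw [exponentialPDF_of_nonneg (by linarith), exponentialPDF_of_nonneg hu0.le,
          ← ENNReal.ofReal_mul (Real.exp_pos _).le, mul_left_comm, ← Real.exp_add]
        ring_nf
    _ = ENNReal.ofReal (Real.exp (-(r * t))) * expMeasure r A := by
        rw [lintegral_const_mul _ hpdf, ← hdensity _ hpos, Set.inter_comm,
          measure_inter_conull (by simp [Set.compl_Ioi, expMeasure_Iic hr])]

end Exponential

section ExponentialOvershoot

variable {r Δ : ℝ}

local notation "ν" => Measure.infinitePi fun _ : ℕ => expMeasure r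

lemma passageIndex_succ_inter_overshoot_eq_preimage (j : ℕ) (A : Set ℝ) :
    passageIndex Δ ⁻¹' {j + 1} ∩ overshoot Δ ⁻¹' A =
      (fun y => (truncate j y, shift j y)) ⁻¹'
        {p | (∀ i ≤ j, ∑ l ∈ range i, p.1 l ≤ Δ) ∧ Δ - ∑ l ∈ range j, p.1 l < p.2 0 ∧
          p.2 0 - (Δ - ∑ l ∈ range j, p.1 l) ∈ A} := by
  ext y
  have hover : ∑ l ∈ range (j + 1), y l - Δ = y j - (Δ - ∑ l ∈ range j, y l) := by
    rw [sum_range_succ]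
    ring
  simp only [Set.mem_inter_iff, Set.mem_preimage, Set.mem_singleton_iff, Set.mem_ofPred_eq,
    sum_range_truncate le_rfl, shift, add_zero]
  constructor
  · rintro ⟨hK, hA⟩
    obtain ⟨hpass, hbefore⟩ := (passageIndex_eq_iff j.succ_ne_zero).1 hK
    refine ⟨fun i hi => ?_, ?_, ?_⟩
    · rw [sum_range_truncate hi]
      exact hbefore i (Nat.lt_succ_of_le hi)
    · rw [sum_range_succ] at hpass
      linarith
    · rwa [overshoot_of_passageIndex_eq hK, hover] at hA
  · rintro ⟨hbefore, hpass, hA⟩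
    have hK : passageIndex Δ y = j + 1 := by
      refine (passageIndex_eq_iff j.succ_ne_zero).2 ⟨?_, fun i hi => ?_⟩
      · rw [sum_range_succ]
        linarith
      · simpa [sum_range_truncate (Nat.le_of_lt_succ hi)] using hbefore i (Nat.le_of_lt_succ hi)
    exact ⟨hK, by rwa [overshoot_of_passageIndex_eq hK, hover]⟩

lemma infinitePi_passageIndex_succ_inter_overshoot (hr : 0 < r) (j : ℕ) {A : Set ℝ}
    (hA : MeasurableSet A) :
    ν (passageIndex Δ ⁻¹' {j + 1} ∩ overshoot Δ ⁻¹' A) =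
      ν (passageIndex Δ ⁻¹' {j + 1}) * expMeasure r A := by
  have := isProbabilityMeasure_expMeasure hr
  suffices h : ∃ c, ∀ A, MeasurableSet A →
      ν (passageIndex Δ ⁻¹' {j + 1} ∩ overshoot Δ ⁻¹' A) = c * expMeasure r A by
    obtain ⟨c, hc⟩ := h
    have huniv := hc Set.univ .univ
    rw [Set.preimage_univ, Set.inter_univ, measure_univ, mul_one] at huniv
    rw [hc A hA, huniv]
  simp_rw [passageIndex_succ_inter_overshoot_eq_preimage]
  let C := {u : ℕ → ℝ | ∀ i ≤ j, ∑ l ∈ range i, u l ≤ Δ}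
  have hC : MeasurableSet C := by
    simp_rw [C, Set.ofPred_forall]
    exact .iInter fun i => .iInter fun _ => measurableSet_le (by fun_prop) measurable_const
  -- `c` is the expectation of `e^{-r (Δ - ∑_{l<j} y l)}` on the event that the partial sums up to
  -- `j` stay below `Δ`
  refine ⟨∫⁻ u in C, ENNReal.ofReal (Real.exp (-(r * (Δ - ∑ l ∈ range j, u l))))
    ∂(Measure.map (truncate j) ν), fun A hA => ?_⟩
  have hF : MeasurableSet {p : (ℕ → ℝ) × (ℕ → ℝ) | (∀ i ≤ j, ∑ l ∈ range i, p.1 l ≤ Δ) ∧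
      Δ - ∑ l ∈ range j, p.1 l < p.2 0 ∧ p.2 0 - (Δ - ∑ l ∈ range j, p.1 l) ∈ A} :=
    (measurable_fst hC).inter ((measurableSet_lt (f := fun p : (ℕ → ℝ) × (ℕ → ℝ) =>
      Δ - ∑ l ∈ range j, p.1 l) (g := fun p => p.2 0) (by fun_prop) (by fun_prop)).inter
      (measurableSet_preimage (f := fun p : (ℕ → ℝ) × (ℕ → ℝ) =>
        p.2 0 - (Δ - ∑ l ∈ range j, p.1 l)) (by fun_prop) hA))
  rw [← Measure.map_apply (by fun_prop) hF,
    infinitePi_map_truncate_shift, Measure.prod_apply hF, ← lintegral_mul_const _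
    ((by fun_prop : Measurable fun u : ℕ → ℝ =>
      ENNReal.ofReal (Real.exp (-(r * (Δ - ∑ l ∈ range j, u l)))))),
    ← lintegral_indicator hC]
  refine lintegral_congr fun u => ?_
  by_cases hu : ∀ i ≤ j, ∑ l ∈ range i, u l ≤ Δ
  · have ht : 0 ≤ Δ - ∑ l ∈ range j, u l := sub_nonneg.2 (hu j le_rfl)
    simp only [Set.preimage, Set.mem_ofPred_eq, eq_true hu, true_and,
      Set.indicator_of_mem (show u ∈ C from hu)]
    rw [← expMeasure_memoryless hr ht hA]
    exact (measurePreserving_eval_infinitePi (fun _ => expMeasure r) 0).measure_preimage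
      ((measurableSet_lt measurable_const measurable_id).inter
        (measurable_id.sub measurable_const hA)).nullMeasurableSet
  · simp [Set.preimage, hu, Set.indicator_of_notMem (show u ∉ C from hu)]

lemma infinitePi_expMeasure_passageIndex_eq_zero (hr : 0 < r) (hΔ : 0 ≤ Δ) :
    ν (passageIndex Δ ⁻¹' {0}) = 0 :=
  have := isProbabilityMeasure_expMeasure hr
  infinitePi_passageIndex_eq_zero hΔ (ae_expMeasure_nonneg hr) (expMeasure_Iic_lt_one hr Δ)

theorem infinitePi_map_overshoot (hr : 0 < r) (hΔ : 0 ≤ Δ) :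
    Measure.map (overshoot Δ) ν = expMeasure r := by
  have := isProbabilityMeasure_expMeasure hr
  have hslice (k : ℕ) {A : Set ℝ} (hA : MeasurableSet A) :
      ν (passageIndex Δ ⁻¹' {k} ∩ overshoot Δ ⁻¹' A) =
        ν (passageIndex Δ ⁻¹' {k}) * expMeasure r A := by
    rcases k with _ | j
    · have h0 := infinitePi_expMeasure_passageIndex_eq_zero hr hΔ
      rw [measure_mono_null Set.inter_subset_left h0, h0, zero_mul]
    · exact infinitePi_passageIndex_succ_inter_overshoot hr j hA
  ext A hA
  rw [Measure.map_apply measurable_overshoot hA,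
    measure_eq_tsum_inter_preimage_singleton _ measurable_passageIndex,
    tsum_congr fun k => hslice k hA, ENNReal.tsum_mul_right]
  simpa using congrArg (· * expMeasure r A)
    (measure_eq_tsum_inter_preimage_singleton ν measurable_passageIndex Set.univ).symm

theorem infinitePi_map_overshoot_restart (hr : 0 < r) (hΔ : 0 ≤ Δ) :
    Measure.map (fun y => (overshoot Δ y, restart Δ y)) ν = (expMeasure r).prod ν := by
  have := isProbabilityMeasure_expMeasure hr
  rw [infinitePi_map_overshoot_restart_eq_prod
    (infinitePi_expMeasure_passageIndex_eq_zero hr hΔ), infinitePi_map_overshoot hr hΔ]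

lemma overshoots_succ (y : ℕ → ℝ) (n : ℕ) :
    overshoots Δ y (n + 1) = overshoots Δ (restart Δ y) n := by
  rw [overshoots, overshoots, Function.iterate_succ_apply]

lemma infinitePi_overshoots_mem_of_lt (hr : 0 < r) (hΔ : 0 ≤ Δ) (n : ℕ) {t : ℕ → Set ℝ}
    (ht : ∀ i, MeasurableSet (t i)) :
    ν {y | ∀ i < n, overshoots Δ y i ∈ t i} = ∏ i ∈ range n, expMeasure r (t i) := by
  have := isProbabilityMeasure_expMeasure hr
  induction n generalizing t with
  | zero => simp
  | succ n ih =>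
    have hmeas : MeasurableSet {z | ∀ i < n, overshoots Δ z i ∈ t (i + 1)} := by
      simp_rw [Set.ofPred_forall]
      exact .iInter fun i => .iInter fun _ =>
        (measurable_pi_apply i).comp measurable_overshoots (ht _)
    have hsplit : {y | ∀ i < n + 1, overshoots Δ y i ∈ t i} =
        (fun y => (overshoot Δ y, restart Δ y)) ⁻¹'
          (t 0 ×ˢ {z | ∀ i < n, overshoots Δ z i ∈ t (i + 1)}) := by
      ext y
      simp only [Set.mem_ofPred_eq, Nat.forall_lt_succ_left', overshoots_succ, Set.mem_preimage,
        Set.mem_prod]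
      rfl
    rw [hsplit, ← Measure.map_apply (by fun_prop) ((ht 0).prod hmeas),
      infinitePi_map_overshoot_restart hr hΔ, Measure.prod_prod, ih fun i => ht _,
      prod_range_succ', mul_comm]

theorem infinitePi_map_overshoots (hr : 0 < r) (hΔ : 0 ≤ Δ) :
    Measure.map (overshoots Δ) ν = Measure.infinitePi fun _ : ℕ => expMeasure r := by
  have := isProbabilityMeasure_expMeasure hr
  classical
  refine Measure.eq_infinitePi _ fun s t ht => ?_
  obtain ⟨n, hsub⟩ := s.exists_nat_subset_range
  set t' : ℕ → Set ℝ := fun i => if i ∈ s then t i else Set.univ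
  have hpi : overshoots Δ ⁻¹' (s : Set ℕ).pi t = {y | ∀ i < n, overshoots Δ y i ∈ t' i} := by
    ext y
    simp only [Set.mem_preimage, Set.mem_pi, SetLike.mem_coe, Set.mem_ofPred_eq, t']
    refine ⟨fun h i _ => ?_, fun h i hi => by simpa [hi] using h i (mem_range.1 (hsub hi))⟩
    split_ifs with hi
    exacts [h i hi, trivial]
  rw [Measure.map_apply measurable_overshoots (.pi s.countable_toSet fun i _ => ht i), hpi,
    infinitePi_overshoots_mem_of_lt hr hΔ n fun i => by
      by_cases hi : i ∈ s <;> simp [t', hi, ht i],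
    ← prod_subset hsub fun i _ hi => by simp [t', hi]]
  exact prod_congr rfl fun i hi => by simp [t', hi]

lemma infinitePi_map_restart (hr : 0 < r) (hΔ : 0 ≤ Δ) : Measure.map (restart Δ) ν = ν := by
  have := isProbabilityMeasure_expMeasure hr
  have h := congrArg (Measure.map Prod.snd) (infinitePi_map_overshoot_restart hr hΔ)
  rwa [Measure.map_map measurable_snd (by fun_prop), Measure.map_snd_prod, measure_univ,
    one_smul] at h

lemma ae_passageIndex_iterate_restart_ne_zero (hr : 0 < r) (hΔ : 0 ≤ Δ) :
    ∀ᵐ y ∂ν, ∀ d, passageIndex Δ ((restart Δ)^[d] y) ≠ 0 := by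
  refine ae_all_iff.2 fun d => ?_
  have hpres : MeasurePreserving (restart Δ) ν ν :=
    ⟨measurable_restart, infinitePi_map_restart hr hΔ⟩
  refine (hpres.iterate d).quasiMeasurePreserving.ae (p := fun y => passageIndex Δ y ≠ 0)
    (ae_iff.2 ?_)
  simp only [ne_eq, not_not]
  exact infinitePi_expMeasure_passageIndex_eq_zero hr hΔ

end ExponentialOvershoot

section Arrivals

variable {Ω : Type*} {Y : ℕ → Ω → ℝ} {Δ : ℝ} {ω : Ω}

lemma sInf_arrivals_after (hY : ∀ j, 0 ≤ Y j ω) (hΔ : 0 ≤ Δ) {m : ℕ}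
    (hK : passageIndex Δ (shift m fun j => Y j ω) ≠ 0) :
    sInf {t : ℝ | ∃ i : ℕ, 1 ≤ i ∧ t = tau Y i ω ∧ tau Y m ω + Δ < t} =
      tau Y (m + passageIndex Δ (shift m fun j => Y j ω)) ω := by
  simp only [tau]
  set K := passageIndex Δ (shift m fun j => Y j ω)
  obtain ⟨hpass, hbefore⟩ := (passageIndex_eq_iff hK).1 rfl
  have hmono : Monotone fun i => ∑ j ∈ range i, Y j ω :=
    (sum_mono_set_of_nonneg hY).comp range_mono
  refine IsLeast.csInf_eq ⟨⟨m + K, by omega, rfl, by rw [sum_range_add_shift]; linarith⟩, ?_⟩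
  rintro t ⟨i, -, rfl, hi⟩
  obtain ⟨k, rfl⟩ : ∃ k, i = m + k :=
    Nat.exists_eq_add_of_le (le_of_not_gt fun h => by linarith [hmono h.le])
  rw [sum_range_add_shift] at hi
  exact hmono (Nat.add_le_add_left (not_lt.1 fun hk => by linarith [hbefore k hk]) m)

variable {T : ℕ → Ω → ℝ}

lemma exists_T_eq_tau_and_iterate_restart_eq_shift (hΔ : 0 ≤ Δ)
    (hT1 : ∀ ω, T 1 ω = tau Y 1 ω)
    (hTrec : ∀ d : ℕ, 1 ≤ d → ∀ ω,
      T (d + 1) ω = sInf {x : ℝ | ∃ i : ℕ, 1 ≤ i ∧ x = tau Y i ω ∧ T d ω + Δ < x})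
    (hY : ∀ j, 0 ≤ Y j ω)
    (hpass : ∀ d, passageIndex Δ ((restart Δ)^[d] (shift 1 fun j => Y j ω)) ≠ 0) (d : ℕ) :
    ∃ m, T (d + 1) ω = tau Y m ω ∧
      (restart Δ)^[d] (shift 1 fun j => Y j ω) = shift m fun j => Y j ω := by
  induction d with
  | zero => exact ⟨1, hT1 ω, rfl⟩
  | succ d ih =>
    obtain ⟨m, hT, hiter⟩ := ih
    have hK := hpass d
    rw [hiter] at hK
    refine ⟨m + passageIndex Δ (shift m fun j => Y j ω), ?_, ?_⟩
    · rw [hTrec (d + 1) d.succ_pos ω, hT]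
      exact sInf_arrivals_after hY hΔ hK
    · rw [Function.iterate_succ_apply', hiter, restart, shift_shift]

lemma T_increment_eq_overshoots (hΔ : 0 ≤ Δ)
    (hT1 : ∀ ω, T 1 ω = tau Y 1 ω)
    (hTrec : ∀ d : ℕ, 1 ≤ d → ∀ ω,
      T (d + 1) ω = sInf {x : ℝ | ∃ i : ℕ, 1 ≤ i ∧ x = tau Y i ω ∧ T d ω + Δ < x})
    (hY : ∀ j, 0 ≤ Y j ω)
    (hpass : ∀ d, passageIndex Δ ((restart Δ)^[d] (shift 1 fun j => Y j ω)) ≠ 0) (d : ℕ) :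
    T (d + 2) ω - T (d + 1) ω - Δ = overshoots Δ (shift 1 fun j => Y j ω) d := by
  obtain ⟨m, hT, hiter⟩ := exists_T_eq_tau_and_iterate_restart_eq_shift hΔ hT1 hTrec hY hpass d
  have hK := hpass d
  rw [hiter] at hK
  rw [hTrec (d + 1) d.succ_pos ω, hT, sInf_arrivals_after hY hΔ hK, overshoots, hiter,
    overshoot, tau, tau, sum_range_add_shift]
  ring

end Arrivals

end HonestTree

/-- Let `T_1 = τ_1` and `T_{d+1} = min {τ_i : τ_i > T_d + Δ}` be the
depth-increase times of the fictitious honest tree. Then the increments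
`(T_{d+1} − T_d − Δ)_{d ≥ 1}` form an i.i.d. sequence of exponential random variables with
rate `λ_h`. -/
theorem honest_tree_increments_iid_exponential
    {Ω : Type*} [MeasurableSpace Ω] (P : Measure Ω) [IsProbabilityMeasure P]
    (lambda_h : ℝ) (hlh : 0 < lambda_h) (Δ : ℝ) (hΔ : 0 ≤ Δ)
    (Y : ℕ → Ω → ℝ)
    (hmeas : ∀ i, Measurable (Y i))
    (hdist : ∀ i, P.map (Y i) = expMeasure lambda_h)
    (hindep : iIndepFun Y P)
    (T : ℕ → Ω → ℝ)
    (hT1 : ∀ ω, T 1 ω = tau Y 1 ω)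
    (hTrec : ∀ d : ℕ, 1 ≤ d → ∀ ω,
      T (d + 1) ω = sInf {x : ℝ | ∃ i : ℕ, 1 ≤ i ∧ x = tau Y i ω ∧ T d ω + Δ < x}) :
    iIndepFun
        (fun (d : ℕ) (ω : Ω) => T (d + 2) ω - T (d + 1) ω - Δ) P ∧
      ∀ d : ℕ, P.map (fun ω => T (d + 2) ω - T (d + 1) ω - Δ) = expMeasure lambda_h := by
  have := isProbabilityMeasure_expMeasure hlh
  set Z : Ω → ℕ → ℝ := fun ω => shift 1 fun j => Y j ω
  have hZ : Measurable Z := (measurable_shift 1).comp (measurable_pi_lambda _ hmeas)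
  have hlaw : P.map Z = Measure.infinitePi fun _ : ℕ => expMeasure lambda_h := by
    change P.map (shift 1 ∘ fun ω j => Y j ω) = _
    rw [← Measure.map_map (measurable_shift 1) (measurable_pi_lambda _ hmeas),
      hindep.map_fun_eq_infinitePi_map hmeas, funext hdist, infinitePi_map_shift]
  have hY : ∀ᵐ ω ∂P, ∀ j, 0 ≤ Y j ω := ae_all_iff.2 fun j =>
    ae_of_ae_map (hmeas j).aemeasurable (hdist j ▸ ae_expMeasure_nonneg hlh)
  have hpass : ∀ᵐ ω ∂P, ∀ d, passageIndex Δ ((restart Δ)^[d] (Z ω)) ≠ 0 :=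
    ae_of_ae_map hZ.aemeasurable (hlaw ▸ ae_passageIndex_iterate_restart_ne_zero hlh hΔ)
  have hinc : (fun ω d => T (d + 2) ω - T (d + 1) ω - Δ) =ᵐ[P] overshoots Δ ∘ Z := by
    filter_upwards [hY, hpass] with ω hYω hpassω
    exact funext (T_increment_eq_overshoots hΔ hT1 hTrec hYω hpassω)
  refine iIndepFun_and_map_eq_of_map_eq_infinitePi
    ((measurable_overshoots.comp hZ).aemeasurable.congr hinc.symm) ?_
  rw [Measure.map_congr hinc, ← Measure.map_map measurable_overshoots hZ, hlaw,
    infinitePi_map_overshoots hlh hΔ]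
end

section
/- Under the hypotheses Δ > 0 and 0 < λ_a < λ_h/(1 + λ_h·Δ), the constant s = (λ_h − λ_a)/2 + (2 − √(4 + Δ²·(λ_a + λ_h)²))/(2Δ) satisfies 0 < s < λ_h, and the constant A_0 = ln((λ_h − s)·(λ_a + s)/(λ_a·λ_h)) − s·Δ satisfies A_0 > 0. -/
/-- The Chernoff tilt parameter `s` of Proposition C.4. -/
noncomputable def tiltParam (lambda_h lambda_a Δ : ℝ) : ℝ :=
  (lambda_h - lambda_a) / 2 + (2 - Real.sqrt (4 + Δ ^ 2 * (lambda_a + lambda_h) ^ 2)) / (2 * Δ)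

/-- The exponent `A_0` of Proposition C.4 (with the sign convention making it positive). -/
noncomputable def exponentA0 (lambda_h lambda_a Δ : ℝ) : ℝ :=
  Real.log ((lambda_h - tiltParam lambda_h lambda_a Δ) * (lambda_a + tiltParam lambda_h lambda_a Δ)
      / (lambda_a * lambda_h))
    - tiltParam lambda_h lambda_a Δ * Δ

/-- If `Δ > 0` and `0 < λ_a < λ_h / (1 + λ_h Δ)`, then the constant
`s = (λ_h − λ_a)/2 + (2 − √(4 + Δ²(λ_a + λ_h)²))/(2Δ)` satisfies `0 < s < λ_h`, and the
constant `A_0 = ln((λ_h − s)(λ_a + s)/(λ_a λ_h)) − sΔ` satisfies `A_0 > 0`. -/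
theorem tilt_param_and_exponent_positive
    (lambda_h lambda_a Δ : ℝ) (hlh : 0 < lambda_h) (hla : 0 < lambda_a) (hΔ : 0 < Δ)
    (hrate : lambda_a < lambda_h / (1 + lambda_h * Δ)) :
    0 < tiltParam lambda_h lambda_a Δ ∧ tiltParam lambda_h lambda_a Δ < lambda_h ∧
      0 < exponentA0 lambda_h lambda_a Δ := by
  set u := Real.sqrt (4 + Δ ^ 2 * (lambda_a + lambda_h) ^ 2) with hu_def
  have hu_nonneg : 0 ≤ u := Real.sqrt_nonneg _
  have hu : u ^ 2 = 4 + Δ ^ 2 * (lambda_a + lambda_h) ^ 2 :=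
    Real.sq_sqrt (by positivity)
  have hu2 : 2 ≤ u := by nlinarith [hu, hu_nonneg, sq_nonneg (Δ * (lambda_a + lambda_h))]
  have hrate' : lambda_a * (1 + lambda_h * Δ) < lambda_h := by
    rw [lt_div_iff₀ (by positivity)] at hrate
    linarith
  have hal : lambda_a < lambda_h := by nlinarith [mul_pos (mul_pos hla hlh) hΔ]
  set s := tiltParam lambda_h lambda_a Δ with hs_def
  have hs_eq : 2 * Δ * s = Δ * (lambda_h - lambda_a) + 2 - u := by
    rw [hs_def, tiltParam]
    field_simp
    ring
  -- u < Δ(λh−λa)+2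
  have hc : 0 < Δ * (lambda_h - lambda_a) + 2 := by nlinarith
  have hsq : u ^ 2 < (Δ * (lambda_h - lambda_a) + 2) ^ 2 := by
    nlinarith [hu, mul_pos hΔ (show 0 < lambda_h - lambda_a - Δ * lambda_a * lambda_h by nlinarith)]
  have hu_lt : u < Δ * (lambda_h - lambda_a) + 2 :=
    lt_of_pow_lt_pow_left₀ 2 hc.le (by simpa using hsq)
  have hs_pos : 0 < s := by nlinarith [hs_eq, hu_lt, hΔ]
  have hs_lt : s < lambda_h := by nlinarith [hs_eq, hu2, hΔ, hla]
  refine ⟨hs_pos, hs_lt, ?_⟩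
  -- positivity of λh − t, λa + t on [0, s]
  have hden1 : ∀ t ∈ Set.Icc (0:ℝ) s, 0 < lambda_h - t := fun t ht => by
    have := ht.2; linarith
  have hden2 : ∀ t ∈ Set.Icc (0:ℝ) s, 0 < lambda_a + t := fun t ht => by
    have := ht.1; linarith
  -- auxiliary function
  set f : ℝ → ℝ := fun t =>
    Real.log (lambda_h - t) + Real.log (lambda_a + t) - Real.log (lambda_a * lambda_h) - t * Δ
    with hf_def
  have hcont : ContinuousOn f (Set.Icc 0 s) := by
    apply ContinuousOn.sub
    apply ContinuousOn.sub
    apply ContinuousOn.add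
    · exact ((continuous_const.sub continuous_id).continuousOn).log
        (fun t ht => (hden1 t ht).ne')
    · exact ((continuous_const.add continuous_id).continuousOn).log
        (fun t ht => (hden2 t ht).ne')
    · exact continuousOn_const
    · exact (continuous_id.mul continuous_const).continuousOn
  have hderiv : ∀ x ∈ Set.Ioo (0:ℝ) s, 0 < deriv f x := by
    intro x hx
    have hx1 : 0 < lambda_h - x := by have := hx.2; linarith
    have hx2 : 0 < lambda_a + x := by have := hx.1; linarith
    have d1 : HasDerivAt (fun t : ℝ => lambda_h - t) (-1) x := by
      simpa using (hasDerivAt_id x).const_sub lambda_h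
    have d2 : HasDerivAt (fun t : ℝ => lambda_a + t) 1 x := by
      simpa using (hasDerivAt_id x).const_add lambda_a
    have d3 : HasDerivAt (fun t : ℝ => t * Δ) Δ x := by
      simpa using (hasDerivAt_id x).mul_const Δ
    have df : HasDerivAt f (-1 / (lambda_h - x) + 1 / (lambda_a + x) - 0 - Δ) x :=
      (((d1.log hx1.ne').add (d2.log hx2.ne')).sub (hasDerivAt_const x _)).sub d3
    rw [df.deriv]
    have hq : 0 < lambda_h - lambda_a - 2 * x - Δ * ((lambda_a + x) * (lambda_h - x)) := by
      have h1 : 0 < 2 * Δ * s - 2 * Δ * x := by nlinarith [hx.2, hΔ]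
      have h2 : 0 < 2 * Δ * s - 2 * Δ * x + 2 * u := by nlinarith [hu2]
      nlinarith [mul_pos h1 h2, hu, hs_eq, hΔ]
    have key : -1 / (lambda_h - x) + 1 / (lambda_a + x) - 0 - Δ =
        (lambda_h - lambda_a - 2 * x - Δ * ((lambda_a + x) * (lambda_h - x))) /
          ((lambda_h - x) * (lambda_a + x)) := by
      field_simp
      ring
    rw [key]
    exact div_pos hq (mul_pos hx1 hx2)
  have hmono : StrictMonoOn f (Set.Icc 0 s) :=
    strictMonoOn_of_deriv_pos (convex_Icc 0 s) hcont
      (by rwa [interior_Icc])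
  have hlt : f 0 < f s :=
    hmono (Set.left_mem_Icc.2 hs_pos.le) (Set.right_mem_Icc.2 hs_pos.le) hs_pos
  have hf0 : f 0 = 0 := by
    simp only [hf_def]
    rw [Real.log_mul hla.ne' hlh.ne']
    ring
  have hfs : f s = exponentA0 lambda_h lambda_a Δ := by
    have h1 : 0 < lambda_h - s := by linarith
    have h2 : 0 < lambda_a + s := by linarith
    simp only [hf_def, exponentA0, ← hs_def]
    rw [Real.log_div (by positivity) (by positivity),
      Real.log_mul h1.ne' h2.ne', Real.log_mul hla.ne' hlh.ne']
  rw [← hfs]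
  rw [hf0] at hlt
  exact hlt
end

section
/- For every integer n ≥ 1, P( Σ_{i=1}^{n} (Δ + Y_i) ≥ Σ_{i=0}^{n} Z_i ) ≤ e^{−A_0·n}; that is, the probability that a private adversary chain with inter-block times (Z_i)_{i=0}^{n} is at least as fast as the worst-case honest chain, whose n depth increments take time Δ + Y_i each, decays exponentially in n with explicit rate A_0. -/
open MeasureTheory ProbabilityTheory Filter

/-! Chernoff bound. For every `s ∈ [0, λ_h)`, Markov's inequality applied to
`exp (-s (∑ Z - ∑ Y))`, together with the exponential moment generating functions
`E e^{s Y} = λ_h / (λ_h - s)` and `E e^{-s Z} = λ_a / (λ_a + s)`, bounds the probability by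
`e^{s Δ n} (λ_h / (λ_h - s))^n (λ_a / (λ_a + s))^{n+1}`, which is at most
`e^{-n (log ((λ_h - s)(λ_a + s) / (λ_a λ_h)) - s Δ)}`. The rate condition places the optimal
tilt in `(0, λ_h)`. -/

open Real Set

lemma mgf_id_expMeasure {r t : ℝ} (hr : 0 < r) (ht : t < r) :
    mgf id (expMeasure r) t = r / (r - t) := by
  have hdensity : ∀ x, (exponentialPDF r x).toReal • exp (t * id x)
      = (Ici 0).indicator (fun x => r * exp ((t - r) * x)) x := by
    intro x
    rcases lt_or_ge x 0 with hx | hx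
    · simp [exponentialPDF_of_neg hx, hx]
    · rw [exponentialPDF_of_nonneg hx, ENNReal.toReal_ofReal (by positivity),
        indicator_of_mem (mem_Ici.2 hx), smul_eq_mul, id, mul_assoc, ← exp_add]
      ring_nf
  rw [mgf, show expMeasure r = volume.withDensity (exponentialPDF r) from rfl,
    integral_withDensity_eq_integral_toReal_smul (f := exponentialPDF r)
      (measurable_exponentialPDFReal r).ennreal_ofReal
      (ae_of_all _ fun _ => ENNReal.ofReal_lt_top)]
  simp_rw [hdensity]
  rw [integral_indicator measurableSet_Ici, integral_Ici_eq_integral_Ioi, integral_const_mul,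
    integral_exp_mul_Ioi (by linarith)]
  have : r - t ≠ 0 := sub_ne_zero.2 ht.ne'
  rw [mul_zero, exp_zero, ← neg_sub r t]
  field_simp

section MapEqExpMeasure

variable {Ω : Type*} [MeasurableSpace Ω] {P : Measure Ω} {X : Ω → ℝ} {r t : ℝ}

lemma aemeasurable_of_map_eq_expMeasure (hr : 0 < r) (hX : P.map X = expMeasure r) :
    AEMeasurable X P := by
  have := isProbabilityMeasure_expMeasure hr
  exact aemeasurable_of_map_neZero (by rw [hX]; infer_instance)

lemma mgf_eq_of_map_eq_expMeasure (hr : 0 < r) (hX : P.map X = expMeasure r) (ht : t < r) :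
    mgf X P t = r / (r - t) := by
  rw [← mgf_id_map (aemeasurable_of_map_eq_expMeasure hr hX), hX, mgf_id_expMeasure hr ht]

lemma integrable_exp_mul_of_map_eq_expMeasure (hr : 0 < r) (hX : P.map X = expMeasure r)
    (ht : t < r) : Integrable (fun ω => exp (t * X ω)) P := by
  have : NeZero P := ⟨by
    rintro rfl
    exact (isProbabilityMeasure_expMeasure hr).ne_zero _ (by simpa using hX.symm)⟩
  rw [← mgf_pos_iff, mgf_eq_of_map_eq_expMeasure hr hX ht]
  exact div_pos hr (sub_pos.2 ht)

end MapEqExpMeasure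

namespace ProbabilityTheory

variable {Ω ι κ : Type*} [MeasurableSpace Ω] {P : Measure Ω} {W : ι ⊕ κ → Ω → ℝ}

lemma iIndepFun.mgf_sum_inr_sub_sum_inl (hW : iIndepFun W P) (hmeas : ∀ v, AEMeasurable (W v) P)
    (s : Finset ι) (t : Finset κ) (u : ℝ) :
    mgf (fun ω => ∑ j ∈ t, W (.inr j) ω - ∑ i ∈ s, W (.inl i) ω) P u
      = (∏ i ∈ s, mgf (W (.inl i)) P (-u)) * ∏ j ∈ t, mgf (W (.inr j)) P u := by
  set g : ι ⊕ κ → ℝ → ℝ := Sum.elim (fun _ => Neg.neg) (fun _ => id)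
  have hg : ∀ v, Measurable (g v) := by
    rintro (i | j)
    · exact measurable_neg
    · exact measurable_id
  have hsum : (fun ω => ∑ j ∈ t, W (.inr j) ω - ∑ i ∈ s, W (.inl i) ω)
      = ∑ v ∈ s.disjSum t, g v ∘ W v := by
    ext ω
    simp only [Finset.sum_apply, Function.comp_apply, Finset.sum_disjSum, Sum.elim_inl,
      Finset.sum_neg_distrib, Sum.elim_inr, id_eq, g]
    ring
  rw [hsum, (hW.comp g hg).mgf_sum₀ (fun v => (hg v).comp_aemeasurable (hmeas v)),
    Finset.prod_disjSum]
  simp only [g, Sum.elim_inl, Sum.elim_inr, Function.id_comp]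
  congr 1
  exact Finset.prod_congr rfl fun i _ => mgf_neg

lemma iIndepFun.measureReal_sum_inr_sub_sum_inl_le (hW : iIndepFun W P)
    (hmeas : ∀ v, AEMeasurable (W v) P) (s : Finset ι) (t : Finset κ) {ε u : ℝ} (hu : 0 ≤ u)
    (hint_inl : ∀ i ∈ s, Integrable (fun ω => exp (u * W (.inl i) ω)) P)
    (hint_inr : ∀ j ∈ t, Integrable (fun ω => exp (-u * W (.inr j) ω)) P) :
    P.real {ω | ∑ j ∈ t, W (.inr j) ω - ∑ i ∈ s, W (.inl i) ω ≤ ε}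
      ≤ exp (u * ε) * ((∏ i ∈ s, mgf (W (.inl i)) P u) * ∏ j ∈ t, mgf (W (.inr j)) P (-u)) := by
  have := hW.isProbabilityMeasure
  have hmgf := hW.mgf_sum_inr_sub_sum_inl hmeas s t (-u)
  rw [neg_neg] at hmgf
  have hpos : 0 < mgf (fun ω => ∑ j ∈ t, W (.inr j) ω - ∑ i ∈ s, W (.inl i) ω) P (-u) := by
    rw [hmgf]
    exact mul_pos (Finset.prod_pos fun i hi => mgf_pos (hint_inl i hi))
      (Finset.prod_pos fun j hj => mgf_pos (hint_inr j hj))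
  rw [← hmgf, ← neg_neg u, neg_neg (-u)]
  exact measure_le_le_exp_mul_mgf ε (neg_nonpos.2 hu) (mgf_pos_iff.1 hpos)

end ProbabilityTheory

/-- `exponentA0 λ_h λ_a Δ` is `catchUpRate λ_h λ_a Δ (tiltParam λ_h λ_a Δ)`, and `tiltParam` is
the critical point of `catchUpRate`: the smaller root of `1 / (λ_a + s) - 1 / (λ_h - s) = Δ`. -/
noncomputable def catchUpRate (lambda_h lambda_a Δ s : ℝ) : ℝ :=
  log ((lambda_h - s) * (lambda_a + s) / (lambda_a * lambda_h)) - s * Δ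
lemma exp_mul_pow_le_exp_neg_catchUpRate_mul {lambda_h lambda_a Δ s : ℝ} (hla : 0 < lambda_a)
    (hs0 : 0 ≤ s) (hs : s < lambda_h) (n : ℕ) :
    exp (s * (n * Δ)) * ((lambda_h / (lambda_h - s)) ^ n * (lambda_a / (lambda_a + s)) ^ (n + 1))
      ≤ exp (-catchUpRate lambda_h lambda_a Δ s * n) := by
  have hhs : 0 < lambda_h - s := sub_pos.2 hs
  have has : 0 < lambda_a + s := by linarith
  have hlh : 0 < lambda_h := hs0.trans_lt hs
  have hexp : exp (-catchUpRate lambda_h lambda_a Δ s * n)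
      = exp (s * (n * Δ)) * (lambda_h / (lambda_h - s) * (lambda_a / (lambda_a + s))) ^ n := by
    rw [catchUpRate, show ∀ L : ℝ, -(L - s * Δ) * n = s * (n * Δ) + n * -L by intros; ring,
      exp_add, exp_nat_mul, exp_neg, exp_log (div_pos (mul_pos hhs has) (mul_pos hla hlh)),
      inv_div, div_mul_div_comm, mul_comm lambda_a lambda_h]
  rw [hexp, pow_succ, mul_pow, ← mul_assoc (_ ^ n), ← mul_assoc (exp _)]
  exact mul_le_of_le_one_right (by positivity) ((div_le_one has).2 (le_add_of_nonneg_right hs0))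

theorem measure_sum_le_sum_add_le_exp_neg_catchUpRate {Ω : Type*} [MeasurableSpace Ω]
    {P : Measure Ω} {lambda_h lambda_a Δ s : ℝ} (hla : 0 < lambda_a) (hs0 : 0 ≤ s)
    (hs : s < lambda_h) {W : ℕ ⊕ ℕ → Ω → ℝ}
    (hdistY : ∀ i : ℕ, P.map (W (.inl i)) = expMeasure lambda_h)
    (hdistZ : ∀ i : ℕ, P.map (W (.inr i)) = expMeasure lambda_a)
    (hindep : iIndepFun W P) (n : ℕ) :
    P {ω | ∑ i ∈ Finset.range (n + 1), W (.inr i) ω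
            ≤ ∑ i ∈ Finset.range n, (Δ + W (.inl i) ω)} ≤
      ENNReal.ofReal (exp (-catchUpRate lambda_h lambda_a Δ s * n)) := by
  have := hindep.isProbabilityMeasure
  have hlh : 0 < lambda_h := hs0.trans_lt hs
  have hmeas : ∀ v, AEMeasurable (W v) P := by
    rintro (i | i)
    · exact aemeasurable_of_map_eq_expMeasure hlh (hdistY i)
    · exact aemeasurable_of_map_eq_expMeasure hla (hdistZ i)
  have hevent : {ω | ∑ i ∈ Finset.range (n + 1), W (.inr i) ω
      ≤ ∑ i ∈ Finset.range n, (Δ + W (.inl i) ω)}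
      = {ω | ∑ j ∈ Finset.range (n + 1), W (.inr j) ω - ∑ i ∈ Finset.range n, W (.inl i) ω
          ≤ n * Δ} := by
    ext ω
    simp only [Set.mem_ofPred_eq, Finset.sum_add_distrib, Finset.sum_const, Finset.card_range,
      nsmul_eq_mul, sub_le_iff_le_add]
  have hchernoff := hindep.measureReal_sum_inr_sub_sum_inl_le hmeas (Finset.range n)
    (Finset.range (n + 1)) (ε := n * Δ) hs0
    (fun i _ => integrable_exp_mul_of_map_eq_expMeasure hlh (hdistY i) hs)
    (fun j _ => integrable_exp_mul_of_map_eq_expMeasure hla (hdistZ j) (by linarith))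
  rw [Finset.prod_congr rfl fun i _ => mgf_eq_of_map_eq_expMeasure hlh (hdistY i) hs,
    Finset.prod_congr rfl fun j _ => mgf_eq_of_map_eq_expMeasure hla (hdistZ j) (by linarith),
    Finset.prod_const, Finset.prod_const, Finset.card_range, Finset.card_range, sub_neg_eq_add]
    at hchernoff
  rw [hevent, ← ofReal_measureReal]
  exact ENNReal.ofReal_le_ofReal
    (hchernoff.trans (exp_mul_pow_le_exp_neg_catchUpRate_mul hla hs0 hs n))

lemma tiltParam_pos {lambda_h lambda_a Δ : ℝ} (hlh : 0 < lambda_h) (hla : 0 < lambda_a)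
    (hΔ : 0 < Δ) (hrate : lambda_a < lambda_h / (1 + lambda_h * Δ)) :
    0 < tiltParam lambda_h lambda_a Δ := by
  have hrate_mul : lambda_a * (1 + lambda_h * Δ) < lambda_h :=
    (lt_div_iff₀ (by positivity)).1 hrate
  have hsqrt : √(4 + Δ ^ 2 * (lambda_a + lambda_h) ^ 2) < 2 + (lambda_h - lambda_a) * Δ := by
    have hlt : lambda_a < lambda_h := by nlinarith [mul_pos hla (mul_pos hlh hΔ)]
    rw [sqrt_lt' (by nlinarith [mul_pos (sub_pos.2 hlt) hΔ])]
    nlinarith [mul_pos hΔ (sub_pos.2 hrate_mul)]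
  rw [tiltParam, div_add_div _ _ two_ne_zero (by positivity)]
  exact div_pos (by nlinarith) (by positivity)

lemma tiltParam_lt {lambda_h lambda_a Δ : ℝ} (hlh : 0 < lambda_h) (hla : 0 < lambda_a)
    (hΔ : 0 < Δ) : tiltParam lambda_h lambda_a Δ < lambda_h := by
  have hsqrt : 2 ≤ √(4 + Δ ^ 2 * (lambda_a + lambda_h) ^ 2) :=
    le_sqrt_of_sq_le (by norm_num; positivity)
  have : (2 - √(4 + Δ ^ 2 * (lambda_a + lambda_h) ^ 2)) / (2 * Δ) ≤ 0 :=
    div_nonpos_of_nonpos_of_nonneg (by linarith) (by positivity)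
  rw [tiltParam]
  linarith

theorem private_attack_catch_up_bound_general
    {Ω : Type*} [MeasurableSpace Ω] (P : Measure Ω)
    (lambda_h lambda_a Δ : ℝ) (hlh : 0 < lambda_h) (hla : 0 < lambda_a) (hΔ : 0 < Δ)
    (hrate : lambda_a < lambda_h / (1 + lambda_h * Δ))
    (W : ℕ ⊕ ℕ → Ω → ℝ)
    (hdistY : ∀ i : ℕ, P.map (W (Sum.inl i)) = expMeasure lambda_h)
    (hdistZ : ∀ i : ℕ, P.map (W (Sum.inr i)) = expMeasure lambda_a)
    (hindep : iIndepFun W P)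
    (n : ℕ) :
    P {ω | ∑ i ∈ Finset.range (n + 1), W (Sum.inr i) ω
            ≤ ∑ i ∈ Finset.range n, (Δ + W (Sum.inl i) ω)} ≤
      ENNReal.ofReal (Real.exp (-(exponentA0 lambda_h lambda_a Δ) * n)) :=
  measure_sum_le_sum_add_le_exp_neg_catchUpRate hla (tiltParam_pos hlh hla hΔ hrate).le
    (tiltParam_lt hlh hla hΔ) hdistY hdistZ hindep n

/-- Let `(Y_i)_{i ≥ 1}` be i.i.d. exponential with rate `λ_h` and
`(Z_i)_{i ≥ 0}` i.i.d. exponential with rate `λ_a`, the two families independent of each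
other (encoded as a single independent family `W` indexed by `ℕ ⊕ ℕ`, with `Y i = W (inl i)`
and `Z i = W (inr i)`). If `λ_a < λ_h / (1 + λ_h Δ)`, then for every `n ≥ 1`,
`P(∑_{i=1}^n (Δ + Y_i) ≥ ∑_{i=0}^n Z_i) ≤ e^{−A_0 n}`. -/
theorem private_attack_catch_up_bound
    {Ω : Type*} [MeasurableSpace Ω] (P : Measure Ω) [IsProbabilityMeasure P]
    (lambda_h lambda_a Δ : ℝ) (hlh : 0 < lambda_h) (hla : 0 < lambda_a) (hΔ : 0 < Δ)
    (hrate : lambda_a < lambda_h / (1 + lambda_h * Δ))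
    (W : ℕ ⊕ ℕ → Ω → ℝ)
    (hmeas : ∀ v, Measurable (W v))
    (hdistY : ∀ i : ℕ, P.map (W (Sum.inl i)) = expMeasure lambda_h)
    (hdistZ : ∀ i : ℕ, P.map (W (Sum.inr i)) = expMeasure lambda_a)
    (hindep : iIndepFun W P)
    (n : ℕ) (hn : 1 ≤ n) :
    P {ω | ∑ i ∈ Finset.range (n + 1), W (Sum.inr i) ω
            ≤ ∑ i ∈ Finset.range n, (Δ + W (Sum.inl i) ω)} ≤
      ENNReal.ofReal (Real.exp (-(exponentA0 lambda_h lambda_a Δ) * n)) :=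
  private_attack_catch_up_bound_general P lambda_h lambda_a Δ hlh hla hΔ hrate W hdistY hdistZ
    hindep n
end

section
/- For every ε ∈ (0,1) there exist constants A > 0 and α > 0 (depending only on ε, λ_h and Δ) such that for all t > 0, P( D_h(t) < (1−ε)·λ_h·t/(1 + λ_h·Δ) ) ≤ A·e^{−α·t}; that is, the depth of the fictitious honest tree grows at rate at least λ_h/(1 + λ_h·Δ) up to exponentially small probability. -/
/-!
By memorylessness, the depth-increase times form a renewal sequence: `T_{k+1} - T_k` is `Δ` plus
an independent `Exp(λ_h)` overshoot. A Chernoff bound with a small parameter `s` therefore gives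
`P(T_d > t) ≤ (λ_h / (λ_h - s))^d e^{s Δ (d - 1) - s t}`, which is exponentially small in `t` for
`d = ⌈(1 - ε) λ_h t / (1 + λ_h Δ)⌉`, and `D_h(t) < d` forces `T_d > t`. The renewal structure is
made formal by running the tree as a Markov chain driven by the i.i.d. inter-arrival times, with
the depth capped at `d`, and integrating an exponential martingale along it.
-/
open MeasureTheory ProbabilityTheory Filter

namespace HonestTree

/-- The depth `D_h(t) = sup {d ≥ 1 : T_d ≤ t}` of the fictitious honest tree at time `t`
(with `D_h(t) = 0` if `T_1 > t`), where `T_d` is the time the tree reaches depth `d`. -/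
noncomputable def Dh {Ω : Type*} (T : ℕ → Ω → ℝ) (t : ℝ) (ω : Ω) : ℕ :=
  sSup {d : ℕ | 1 ≤ d ∧ T d ω ≤ t}

end HonestTree

open HonestTree

open Real Set Topology
open scoped ENNReal

namespace HonestTree

section ExpMeasure

variable {l s g : ℝ}

lemma expMeasure_eq_withDensity : expMeasure l = volume.withDensity (exponentialPDF l) := rfl

lemma expMeasure_Iic_s13 (hl : 0 < l) (hg : 0 ≤ g) :
    expMeasure l (Iic g) = ENNReal.ofReal (1 - exp (-(l * g))) := by
  rw [expMeasure_eq_withDensity, withDensity_apply _ measurableSet_Iic,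
    lintegral_exponentialPDF_eq_antiDeriv hl g, if_pos hg]

lemma ae_pos_expMeasure (hl : 0 < l) : ∀ᵐ u ∂expMeasure l, 0 < u := by
  rw [ae_iff]
  simp only [not_lt]
  exact (expMeasure_Iic_s13 hl le_rfl).trans (by simp)

lemma lintegral_exp_mul_sub_Ioi_expMeasure (hl : 0 < l) (hsl : s < l) (hg : 0 ≤ g) :
    ∫⁻ u in Ioi g, ENNReal.ofReal (exp (s * (u - g))) ∂expMeasure l =
      ENNReal.ofReal (l / (l - s) * exp (-(l * g))) := by
  have hdens : ∀ u ∈ Ioi g, exponentialPDF l u * ENNReal.ofReal (exp (s * (u - g))) =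
      ENNReal.ofReal (l * exp (-(s * g)) * exp ((s - l) * u)) := by
    intro u hu
    rw [exponentialPDF_of_nonneg (hg.trans (le_of_lt hu)), ← ENNReal.ofReal_mul (by positivity),
      mul_assoc, mul_assoc, ← exp_add, ← exp_add]
    ring_nf
  have hint : IntegrableOn (fun u => l * exp (-(s * g)) * exp ((s - l) * u)) (Ioi g) :=
    (integrableOn_exp_mul_Ioi (by linarith) g).const_mul _
  rw [expMeasure_eq_withDensity, restrict_withDensity measurableSet_Ioi,
    lintegral_withDensity_eq_lintegral_mul _
      (show Measurable (exponentialPDF l) from (measurable_exponentialPDFReal l).ennreal_ofReal)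
      (by fun_prop), Pi.mul_def,
    setLIntegral_congr_fun measurableSet_Ioi hdens,
    ← ofReal_integral_eq_lintegral_ofReal hint (ae_of_all _ fun u => by positivity),
    integral_const_mul, integral_exp_mul_Ioi (by linarith)]
  congr 1
  rw [show -(l * g) = -(s * g) + (s - l) * g by ring, exp_add, neg_div, ← div_neg, neg_sub]
  ring

lemma lintegral_exp_mul_expMeasure (hl : 0 < l) (hsl : s < l) :
    ∫⁻ u, ENNReal.ofReal (exp (s * u)) ∂expMeasure l = ENNReal.ofReal (l / (l - s)) := by
  rw [← Measure.restrict_eq_self_of_ae_mem (s := Ioi 0) (ae_pos_expMeasure hl)]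
  simpa using lintegral_exp_mul_sub_Ioi_expMeasure hl hsl le_rfl

end ExpMeasure

section Chain

variable {E S : Type*}

def chain (x₀ : E → S) (f : S → E → S) (y : ℕ → E) : ℕ → S
  | 0 => x₀ (y 0)
  | n + 1 => f (chain x₀ f y n) (y (n + 1))

variable {x₀ : E → S} {f : S → E → S}

lemma chain_congr {y z : ℕ → E} {n : ℕ} (h : ∀ i ≤ n, y i = z i) :
    chain x₀ f y n = chain x₀ f z n := by
  induction n with
  | zero => simp [chain, h 0 le_rfl]
  | succ n ih => simp only [chain, ih fun i hi => h i (by omega), h (n + 1) le_rfl]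

variable [MeasurableSpace E] [MeasurableSpace S]

lemma measurable_chain (hx₀ : Measurable x₀) (hf : Measurable (Function.uncurry f)) (n : ℕ) :
    Measurable fun y => chain x₀ f y n := by
  induction n with
  | zero => exact hx₀.comp (measurable_pi_apply 0)
  | succ n ih => exact hf.comp (ih.prodMk (measurable_pi_apply (n + 1)))

variable {Ω : Type*} [MeasurableSpace Ω] {P : Measure Ω} {μ : Measure E} {Y : ℕ → Ω → E}

lemma lintegral_comp_eq_lintegral_lintegral_of_iIndepFun (hmeas : ∀ i, Measurable (Y i))
    (hindep : iIndepFun Y P) {n : ℕ} (hdist : P.map (Y (n + 1)) = μ) {G : (ℕ → E) → S}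
    (hG : Measurable G) (hGn : ∀ y z, (∀ i ≤ n, y i = z i) → G y = G z) {F : S × E → ℝ≥0∞}
    (hF : Measurable F) :
    ∫⁻ ω, F (G (Y · ω), Y (n + 1) ω) ∂P = ∫⁻ ω, ∫⁻ u, F (G (Y · ω), u) ∂μ ∂P := by
  subst hdist
  have := hindep.isProbabilityMeasure
  set X : Ω → S := fun ω => G (Y · ω)
  have hX : Measurable X := hG.comp (measurable_pi_lambda _ hmeas)
  -- `X` factors through `Y 0, …, Y n`, which are jointly independent of `Y (n + 1)`.
  let extend : (Finset.range (n + 1) → E) → ℕ → E := fun v i =>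
    if h : i ∈ Finset.range (n + 1) then v ⟨i, h⟩ else v ⟨0, by simp⟩
  have hextend : Measurable extend := by
    refine measurable_pi_lambda _ fun i => ?_
    by_cases h : i ∈ Finset.range (n + 1) <;> simp only [extend, h, dite_true, dite_false] <;>
      exact measurable_pi_apply _
  have hXY : IndepFun X (Y (n + 1)) P := by
    have := (hindep.indepFun_finset (Finset.range (n + 1)) {n + 1} (by simp) hmeas).comp
      (hG.comp hextend) (measurable_pi_apply ⟨n + 1, Finset.mem_singleton_self _⟩)
    refine this.congr (ae_of_all _ fun ω => hGn _ _ fun i hi => ?_) (ae_of_all _ fun _ => rfl)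
    simp [extend, hi]
  rw [← lintegral_map hF (hX.prodMk (hmeas _)), (indepFun_iff_map_prod_eq_prod_map_map
    hX.aemeasurable (hmeas _).aemeasurable).mp hXY, lintegral_prod _ hF.aemeasurable,
    lintegral_map hF.lintegral_prod_right' hX]

lemma lintegral_chain_le (hmeas : ∀ i, Measurable (Y i)) (hindep : iIndepFun Y P)
    (hdist : ∀ i, P.map (Y i) = μ) (hx₀ : Measurable x₀) (hf : Measurable (Function.uncurry f))
    {W : S → ℝ≥0∞} (hW : Measurable W)
    (hdrift : ∀ y n, ∫⁻ u, W (f (chain x₀ f y n) u) ∂μ ≤ W (chain x₀ f y n)) (n : ℕ) :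
    ∫⁻ ω, W (chain x₀ f (Y · ω) n) ∂P ≤ ∫⁻ u, W (x₀ u) ∂μ := by
  induction n with
  | zero => exact (hdist 0 ▸ lintegral_map (hW.comp hx₀) (hmeas 0)).ge
  | succ n ih =>
    calc ∫⁻ ω, W (chain x₀ f (Y · ω) (n + 1)) ∂P
        = ∫⁻ ω, ∫⁻ u, W (f (chain x₀ f (Y · ω) n) u) ∂μ ∂P :=
          lintegral_comp_eq_lintegral_lintegral_of_iIndepFun (F := fun p => W (f p.1 p.2)) hmeas
            hindep (hdist _) (measurable_chain hx₀ hf n) (fun _ _ => chain_congr) (hW.comp hf)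
      _ ≤ ∫⁻ ω, W (chain x₀ f (Y · ω) n) ∂P := lintegral_mono fun ω => hdrift _ n
      _ ≤ ∫⁻ u, W (x₀ u) ∂μ := ih

end Chain

section DepthChain

variable (Δ : ℝ) (d : ℕ)

/-- The state is (depth, time at which this depth was reached, time of the latest arrival);
the depth stops growing at `d`. -/
noncomputable def depthStep (p : ℕ × ℝ × ℝ) (u : ℝ) : ℕ × ℝ × ℝ :=
  if p.1 < d ∧ p.2.1 + Δ < p.2.2 + u then (p.1 + 1, p.2.2 + u, p.2.2 + u)
  else (p.1, p.2.1, p.2.2 + u)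

noncomputable abbrev depthChain (y : ℕ → ℝ) : ℕ → ℕ × ℝ × ℝ :=
  chain (fun u => (1, u, u)) (depthStep Δ d) y

variable {Δ d} {y : ℕ → ℝ}

lemma depthChain_snd_snd_eq_sum (n : ℕ) :
    (depthChain Δ d y n).2.2 = ∑ j ∈ Finset.range (n + 1), y j := by
  induction n with
  | zero => simp [chain]
  | succ n ih =>
    rw [Finset.sum_range_succ, ← ih]
    simp only [chain, depthStep]
    split_ifs <;> rfl

lemma depthChain_fst_le_fst_succ (n : ℕ) :
    (depthChain Δ d y n).1 ≤ (depthChain Δ d y (n + 1)).1 := by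
  simp only [chain, depthStep]
  split_ifs <;> simp

lemma one_le_depthChain_fst (n : ℕ) : 1 ≤ (depthChain Δ d y n).1 := by
  induction n with
  | zero => rfl
  | succ n ih => exact ih.trans (depthChain_fst_le_fst_succ n)

lemma depthChain_fst_le (hd : 1 ≤ d) (n : ℕ) : (depthChain Δ d y n).1 ≤ d := by
  induction n with
  | zero => exact hd
  | succ n ih =>
    simp only [chain, depthStep]
    split_ifs with h
    · exact h.1
    · exact ih

lemma depthChain_snd_snd_le (hΔ : 0 ≤ Δ) (n : ℕ) (hn : (depthChain Δ d y n).1 < d) :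
    (depthChain Δ d y n).2.2 ≤ (depthChain Δ d y n).2.1 + Δ := by
  induction n with
  | zero => simp [chain, hΔ]
  | succ n ih =>
    simp only [chain, depthStep] at hn ⊢
    split_ifs at hn ⊢ with h
    · simp [hΔ]
    · exact not_lt.mp fun h' => h ⟨hn, h'⟩

lemma depthChain_succ_of_fst_eq (n : ℕ) (hn : (depthChain Δ d y n).1 = d) :
    (depthChain Δ d y (n + 1)).1 = d ∧
      (depthChain Δ d y (n + 1)).2.1 = (depthChain Δ d y n).2.1 := by
  simp [chain, depthStep, hn]

lemma depthChain_fst_lt_or_eq {n m : ℕ} (hnm : n ≤ m) :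
    (depthChain Δ d y n).1 < (depthChain Δ d y m).1 ∨
      (depthChain Δ d y m).1 = (depthChain Δ d y n).1 ∧
        (depthChain Δ d y m).2.1 = (depthChain Δ d y n).2.1 := by
  induction m, hnm using Nat.le_induction with
  | base => exact Or.inr ⟨rfl, rfl⟩
  | succ m _ ih =>
    rcases ih with hlt | ⟨hfst, hsnd⟩
    · exact Or.inl (hlt.trans_le (depthChain_fst_le_fst_succ m))
    · simp only [depthChain, chain, depthStep] at hfst hsnd ⊢
      split_ifs
      · exact Or.inl (by omega)
      · exact Or.inr ⟨hfst, hsnd⟩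

end DepthChain

def IsDepthTimes (τ : ℕ → ℝ) (Δ : ℝ) (T : ℕ → ℝ) : Prop :=
  T 1 = τ 1 ∧ ∀ d, 1 ≤ d → T (d + 1) = sInf {x | ∃ i, 1 ≤ i ∧ x = τ i ∧ T d + Δ < x}

section DepthTimes

variable {τ : ℕ → ℝ} {Δ a : ℝ} {T : ℕ → ℝ}

lemma le_sInf_arrivals (hτ : Monotone τ) {k : ℕ} (hk : τ k ≤ a) (hne : ∃ i, a < τ i) :
    τ (k + 1) ≤ sInf {x | ∃ i, 1 ≤ i ∧ x = τ i ∧ a < x} := by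
  obtain ⟨i, hi⟩ := hne
  refine le_csInf ⟨τ i, i, ?_, rfl, hi⟩ ?_
  · have := hτ.reflect_lt (hk.trans_lt hi)
    omega
  · rintro _ ⟨j, -, rfl, hj⟩
    exact hτ (hτ.reflect_lt (hk.trans_lt hj))

lemma sInf_arrivals_eq (hτ : Monotone τ) {k : ℕ} (hk : τ k ≤ a) (hak : a < τ (k + 1)) :
    sInf {x | ∃ i, 1 ≤ i ∧ x = τ i ∧ a < x} = τ (k + 1) := by
  refine le_antisymm (csInf_le ⟨a, ?_⟩ ⟨k + 1, by omega, rfl, hak⟩)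
    (le_sInf_arrivals hτ hk ⟨_, hak⟩)
  rintro _ ⟨i, -, rfl, hi⟩
  exact hi.le

variable (hT : IsDepthTimes τ Δ T) (hτ : Monotone τ) (hτ_top : Tendsto τ atTop atTop)
include hT hτ hτ_top

lemma IsDepthTimes.arrival_le (hΔ : 0 ≤ Δ) {i : ℕ} (hi : 1 ≤ i) : τ i ≤ T i := by
  induction i, hi using Nat.le_induction with
  | base => exact hT.1.ge
  | succ i hi ih =>
    rw [hT.2 i hi]
    exact le_sInf_arrivals hτ (by linarith) (hτ_top.eventually_gt_atTop _).exists

lemma IsDepthTimes.bddAbove (hΔ : 0 ≤ Δ) (t : ℝ) : BddAbove {i | 1 ≤ i ∧ T i ≤ t} := by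
  obtain ⟨N, hN⟩ := (hτ_top.eventually_gt_atTop t).exists
  exact ⟨N, fun i ⟨hi, hit⟩ =>
    (hτ.reflect_lt (((hT.arrival_le hτ hτ_top hΔ hi).trans hit).trans_lt hN)).le⟩

end DepthTimes

section DepthChainTimes

variable {Δ : ℝ} {d : ℕ} {y : ℕ → ℝ} {T : ℕ → ℝ}

lemma monotone_sum_range (hy : ∀ i, 0 ≤ y i) : Monotone fun i => ∑ j ∈ Finset.range i, y j :=
  fun _ _ h => Finset.sum_le_sum_of_subset_of_nonneg (Finset.range_subset_range.mpr h)
    fun i _ _ => hy i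

lemma depthChain_snd_fst_eq (hΔ : 0 ≤ Δ) (hy : ∀ i, 0 ≤ y i)
    (hT : IsDepthTimes (fun i => ∑ j ∈ Finset.range i, y j) Δ T) (n : ℕ) :
    (depthChain Δ d y n).2.1 = T (depthChain Δ d y n).1 := by
  induction n with
  | zero => simp [chain, hT.1]
  | succ n ih =>
    have hC := depthChain_snd_snd_eq_sum (Δ := Δ) (d := d) (y := y) n
    have hCB := depthChain_snd_snd_le (d := d) (y := y) hΔ n
    have he := one_le_depthChain_fst (Δ := Δ) (d := d) (y := y) n
    simp only [depthChain, chain, depthStep] at ih hC hCB he ⊢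
    split_ifs with h
    · rw [hT.2 _ he, ← ih, sInf_arrivals_eq (k := n + 1) (monotone_sum_range hy) (hC ▸ hCB h.1)]
      · rw [Finset.sum_range_succ, ← hC]
      · rw [Finset.sum_range_succ, ← hC]
        exact h.2
    · exact ih

variable (hy : ∀ i, 0 ≤ y i) (hτ_top : Tendsto (fun i => ∑ j ∈ Finset.range i, y j) atTop atTop)
include hy hτ_top

lemma exists_depthChain_fst_gt {n : ℕ} (hn : (depthChain Δ d y n).1 < d) :
    ∃ m, (depthChain Δ d y n).1 < (depthChain Δ d y m).1 := by
  obtain ⟨k, hk, hnk⟩ := ((hτ_top.eventually_gt_atTop ((depthChain Δ d y n).2.1 + Δ)).and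
    (eventually_ge_atTop n)).exists
  rcases depthChain_fst_lt_or_eq hnk with hlt | ⟨hfst, hsnd⟩
  · exact ⟨k, hlt⟩
  refine ⟨k + 1, ?_⟩
  have hC : ∑ j ∈ Finset.range k, y j ≤ (depthChain Δ d y k).2.2 :=
    depthChain_snd_snd_eq_sum (Δ := Δ) (d := d) k ▸ monotone_sum_range hy k.le_succ
  have htrig : (depthChain Δ d y k).1 < d ∧
      (depthChain Δ d y k).2.1 + Δ < (depthChain Δ d y k).2.2 + y (k + 1) :=
    ⟨hfst ▸ hn, by linarith [hy (k + 1)]⟩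
  simp only [depthChain, chain, depthStep] at hfst htrig ⊢
  rw [if_pos htrig, hfst]
  exact Nat.lt_succ_self _

lemma exists_depthChain_fst_eq (hd : 1 ≤ d) : ∃ n, (depthChain Δ d y n).1 = d := by
  have hreach : ∀ k ≤ d, ∃ n, k ≤ (depthChain Δ d y n).1 := by
    intro k
    induction k with
    | zero => exact fun _ => ⟨0, Nat.zero_le _⟩
    | succ k ih =>
      intro hk
      obtain ⟨n, hn⟩ := ih (by omega)
      by_cases h : k + 1 ≤ (depthChain Δ d y n).1
      · exact ⟨n, h⟩
      obtain ⟨m, hm⟩ := exists_depthChain_fst_gt (Δ := Δ) (d := d) hy hτ_top (n := n) (by omega)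
      exact ⟨m, by omega⟩
  obtain ⟨n, hn⟩ := hreach d le_rfl
  exact ⟨n, le_antisymm (depthChain_fst_le hd n) hn⟩

end DepthChainTimes

section Weight

variable {l s Δ : ℝ} {d : ℕ}

/-- Each depth increase costs `Δ` plus an `Exp(l)` overshoot (memorylessness), whose moment
generating function at `s` is `l / (l - s)`; this weight makes the capped depth chain a
martingale. -/
noncomputable def depthWeight (l s Δ : ℝ) (p : ℕ × ℝ × ℝ) : ℝ≥0∞ :=
  ENNReal.ofReal (exp (s * (p.2.1 + Δ - Δ * p.1)) * ((l - s) / l) ^ p.1)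

lemma measurable_depthWeight : Measurable (depthWeight l s Δ) := by
  unfold depthWeight
  fun_prop

lemma measurable_depthStep : Measurable (Function.uncurry (depthStep Δ d)) := by
  unfold depthStep Function.uncurry
  refine Measurable.ite ?_ (by fun_prop) (by fun_prop)
  exact (measurableSet_lt (f := fun a : (ℕ × ℝ × ℝ) × ℝ => a.1.1) (by fun_prop) (by fun_prop)).inter
    (measurableSet_lt (f := fun a : (ℕ × ℝ × ℝ) × ℝ => a.1.2.1 + Δ) (by fun_prop) (by fun_prop))

lemma lintegral_depthWeight_depthStep (hl : 0 < l) (hsl : s < l) (p : ℕ × ℝ × ℝ)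
    (hp : p.1 < d → p.2.2 ≤ p.2.1 + Δ) :
    ∫⁻ u, depthWeight l s Δ (depthStep Δ d p u) ∂expMeasure l = depthWeight l s Δ p := by
  have := isProbabilityMeasure_expMeasure hl
  rcases le_or_gt d p.1 with hdp | hpd
  · simp [depthStep, hdp.not_gt, depthWeight]
  set g := p.2.1 + Δ - p.2.2
  have hg : 0 ≤ g := by linarith [hp hpd]
  have hstay : ∀ u ∈ Iic g, depthWeight l s Δ (depthStep Δ d p u) = depthWeight l s Δ p := by
    intro u (hu : u ≤ g)
    rw [depthStep, if_neg fun h => by linarith [h.2]]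
    rfl
  have hjump : ∀ u ∈ Ioi g, depthWeight l s Δ (depthStep Δ d p u) =
      depthWeight l s Δ p * ENNReal.ofReal ((l - s) / l) * ENNReal.ofReal (exp (s * (u - g))) := by
    intro u (hu : g < u)
    have hls : 0 < (l - s) / l := div_pos (by linarith) hl
    rw [depthStep, if_pos ⟨hpd, by linarith⟩, depthWeight, depthWeight,
      ← ENNReal.ofReal_mul (by positivity), ← ENNReal.ofReal_mul (by positivity)]
    congr 1
    rw [show s * (p.2.2 + u + Δ - Δ * ↑(p.1 + 1)) = s * (p.2.1 + Δ - Δ * p.1) + s * (u - g) by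
      push_cast; ring, exp_add, pow_succ]
    ring
  rw [← lintegral_add_compl _ measurableSet_Iic, compl_Iic, setLIntegral_congr_fun
    measurableSet_Iic hstay, setLIntegral_congr_fun measurableSet_Ioi hjump, lintegral_const,
    lintegral_const_mul _ (by fun_prop), lintegral_exp_mul_sub_Ioi_expMeasure hl hsl hg,
    Measure.restrict_apply_univ, expMeasure_Iic_s13 hl hg, mul_assoc, ← mul_add,
    ← ENNReal.ofReal_mul (by positivity),
    ← ENNReal.ofReal_add (sub_nonneg.2 (exp_le_one_iff.2 (by nlinarith))) (by positivity)]
  have hls : l - s ≠ 0 := by linarith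
  rw [show 1 - exp (-(l * g)) + (l - s) / l * (l / (l - s) * exp (-(l * g))) = 1 by
    field_simp; ring, ENNReal.ofReal_one, mul_one]

lemma lintegral_depthWeight_start (hl : 0 < l) (hsl : s < l) :
    ∫⁻ u, depthWeight l s Δ (1, u, u) ∂expMeasure l = 1 := by
  have hW : ∀ u, depthWeight l s Δ (1, u, u) =
      ENNReal.ofReal ((l - s) / l) * ENNReal.ofReal (exp (s * u)) := by
    intro u
    rw [depthWeight, ← ENNReal.ofReal_mul (div_pos (by linarith) hl).le]
    congr 1
    push_cast
    ring_nf
  have hls : l - s ≠ 0 := by linarith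
  simp_rw [hW]
  rw [lintegral_const_mul _ (by fun_prop), lintegral_exp_mul_expMeasure hl hsl,
    ← ENNReal.ofReal_mul (div_pos (by linarith) hl).le,
    show (l - s) / l * (l / (l - s)) = 1 by field_simp, ENNReal.ofReal_one]

end Weight

section Probability

variable {Ω : Type*} [MeasurableSpace Ω] {P : Measure Ω} {l s Δ : ℝ} {d : ℕ} {Y : ℕ → Ω → ℝ}
  (hl : 0 < l) (hmeas : ∀ i, Measurable (Y i)) (hdist : ∀ i, P.map (Y i) = expMeasure l)
  (hindep : iIndepFun Y P)
include hl hmeas hdist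

lemma ae_forall_nonneg : ∀ᵐ ω ∂P, ∀ i, 0 ≤ Y i ω :=
  ae_all_iff.2 fun i => (ae_of_ae_map (hmeas i).aemeasurable
    (hdist i ▸ ae_pos_expMeasure hl)).mono fun _ h => h.le

include hindep

lemma lintegral_exp_neg_sum (n : ℕ) :
    ∫⁻ ω, ENNReal.ofReal (exp (-∑ i ∈ Finset.range n, Y i ω)) ∂P =
      ENNReal.ofReal (l / (l + 1)) ^ n := by
  have hfactor : ∀ i, ∫⁻ ω, ENNReal.ofReal (exp (-Y i ω)) ∂P = ENNReal.ofReal (l / (l + 1)) := by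
    intro i
    rw [← lintegral_map (f := fun u => ENNReal.ofReal (exp (-u))) (by fun_prop) (hmeas i), hdist i]
    simpa using lintegral_exp_mul_expMeasure (s := -1) hl (by linarith)
  simp_rw [← Finset.sum_neg_distrib, exp_sum,
    ENNReal.ofReal_prod_of_nonneg fun _ _ => (exp_pos _).le]
  rw [lintegral_prod_eq_prod_lintegral_of_indepFun _ (fun i ω => ENNReal.ofReal (exp (-Y i ω)))
    (hindep.comp (fun _ u => ENNReal.ofReal (exp (-u))) fun _ => by fun_prop)
    fun i => by fun_prop]
  simp [hfactor]

lemma measure_forall_sum_lt_eq_zero (R : ℝ) :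
    P {ω | ∀ n, ∑ i ∈ Finset.range n, Y i ω < R} = 0 := by
  have hq : ENNReal.ofReal (l / (l + 1)) < 1 := by
    rw [ENNReal.ofReal_lt_one, div_lt_one (by linarith)]
    linarith
  have hbound : ∀ n, P {ω | ∀ n, ∑ i ∈ Finset.range n, Y i ω < R} ≤
      ENNReal.ofReal (l / (l + 1)) ^ n / ENNReal.ofReal (exp (-R)) := by
    intro n
    rw [← lintegral_exp_neg_sum hl hmeas hdist hindep n]
    refine (measure_mono fun ω hω => ENNReal.ofReal_le_ofReal
      (exp_le_exp.2 (neg_le_neg (hω n).le))).trans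
      (meas_ge_le_lintegral_div (by fun_prop) (ENNReal.ofReal_pos.2 (exp_pos _)).ne'
        ENNReal.ofReal_ne_top)
  have htend : Tendsto (fun n => ENNReal.ofReal (l / (l + 1)) ^ n / ENNReal.ofReal (exp (-R)))
      atTop (𝓝 0) := by
    simpa using ENNReal.Tendsto.div_const (ENNReal.tendsto_pow_atTop_nhds_zero_of_lt_one hq)
      (Or.inr (ENNReal.ofReal_pos.2 (exp_pos _)).ne')
  exact le_antisymm (ge_of_tendsto' htend hbound) bot_le

lemma ae_tendsto_sum_range_atTop :
    ∀ᵐ ω ∂P, Tendsto (fun n => ∑ i ∈ Finset.range n, Y i ω) atTop atTop := by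
  have hunbounded : ∀ᵐ ω ∂P, ∀ R : ℕ, ∃ n, (R : ℝ) ≤ ∑ i ∈ Finset.range n, Y i ω :=
    ae_all_iff.2 fun R => by
      simpa [ae_iff] using measure_forall_sum_lt_eq_zero hl hmeas hdist hindep R
  filter_upwards [ae_forall_nonneg hl hmeas hdist, hunbounded] with ω hY hR
  refine tendsto_atTop_atTop_of_monotone (monotone_sum_range hY) fun b => ?_
  obtain ⟨n, hn⟩ := hR ⌈b⌉₊
  exact ⟨n, (Nat.le_ceil b).trans hn⟩

lemma lintegral_depthWeight_depthChain_le_one (hsl : s < l) (hΔ : 0 ≤ Δ) (n : ℕ) :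
    ∫⁻ ω, depthWeight l s Δ (depthChain Δ d (Y · ω) n) ∂P ≤ 1 :=
  (lintegral_chain_le hmeas hindep hdist (by fun_prop) measurable_depthStep
    measurable_depthWeight (fun _ n =>
      (lintegral_depthWeight_depthStep hl hsl _ (depthChain_snd_snd_le hΔ n)).le) n).trans_eq
    (lintegral_depthWeight_start hl hsl)

lemma measure_depthChain_reach_le (hs : 0 < s) (hsl : s < l) (hΔ : 0 ≤ Δ) (t : ℝ) (n : ℕ) :
    P {ω | (depthChain Δ d (Y · ω) n).1 = d ∧ t < (depthChain Δ d (Y · ω) n).2.1} ≤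
      ENNReal.ofReal (exp (s * (t + Δ - Δ * d)) * ((l - s) / l) ^ d)⁻¹ := by
  set κ := exp (s * (t + Δ - Δ * d)) * ((l - s) / l) ^ d
  have hρ : 0 < (l - s) / l := div_pos (by linarith) hl
  have hκ : 0 < κ := by positivity
  calc P {ω | (depthChain Δ d (Y · ω) n).1 = d ∧ t < (depthChain Δ d (Y · ω) n).2.1}
      ≤ P {ω | ENNReal.ofReal κ ≤ depthWeight l s Δ (depthChain Δ d (Y · ω) n)} := by
        refine measure_mono fun ω ⟨hfst, hsnd⟩ => ENNReal.ofReal_le_ofReal ?_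
        rw [hfst]
        exact mul_le_mul_of_nonneg_right (exp_le_exp.2 (by nlinarith)) (by positivity)
    _ ≤ (∫⁻ ω, depthWeight l s Δ (depthChain Δ d (Y · ω) n) ∂P) / ENNReal.ofReal κ :=
        meas_ge_le_lintegral_div (measurable_depthWeight.comp
          ((measurable_chain (by fun_prop) measurable_depthStep n).comp
            (measurable_pi_lambda _ hmeas))).aemeasurable
          (ENNReal.ofReal_pos.2 hκ).ne' ENNReal.ofReal_ne_top
    _ ≤ 1 / ENNReal.ofReal κ := by
        gcongr
        exact lintegral_depthWeight_depthChain_le_one hl hmeas hdist hindep hsl hΔ n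
    _ = ENNReal.ofReal κ⁻¹ := by rw [one_div, ENNReal.ofReal_inv_of_pos hκ]

variable {T : ℕ → Ω → ℝ} (hT : ∀ ω, IsDepthTimes (tau Y · ω) Δ (T · ω)) (hΔ : 0 ≤ Δ)
  (hd : 1 ≤ d)
include hT hΔ hd

lemma measure_lt_depthTime_le (hs : 0 < s) (hsl : s < l) (t : ℝ) :
    P {ω | t < T d ω} ≤ ENNReal.ofReal (exp (s * (t + Δ - Δ * d)) * ((l - s) / l) ^ d)⁻¹ := by
  set H : ℕ → Set Ω := fun n =>
    {ω | (depthChain Δ d (Y · ω) n).1 = d ∧ t < (depthChain Δ d (Y · ω) n).2.1}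
  have hH : Monotone H := monotone_nat_of_le_succ fun n ω ⟨hfst, hsnd⟩ =>
    ⟨(depthChain_succ_of_fst_eq n hfst).1, (depthChain_succ_of_fst_eq n hfst).2 ▸ hsnd⟩
  have hsub : {ω | t < T d ω} ≤ᵐ[P] ⋃ n, H n := by
    filter_upwards [ae_forall_nonneg hl hmeas hdist,
      ae_tendsto_sum_range_atTop hl hmeas hdist hindep] with ω hY htop htT
    obtain ⟨n, hn⟩ := exists_depthChain_fst_eq (Δ := Δ) hY htop hd
    refine mem_iUnion.2 ⟨n, hn, ?_⟩
    rw [depthChain_snd_fst_eq hΔ hY (hT ω), hn]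
    exact htT
  calc P {ω | t < T d ω} ≤ P (⋃ n, H n) := measure_mono_ae hsub
    _ = ⨆ n, P (H n) := hH.measure_iUnion
    _ ≤ _ := iSup_le fun n => measure_depthChain_reach_le hl hmeas hdist hindep hs hsl hΔ t n

lemma measure_Dh_lt_le {t r : ℝ} (hr : r ≤ d) :
    P {ω | (Dh T t ω : ℝ) < r} ≤ P {ω | t < T d ω} := by
  refine measure_mono_ae ?_
  filter_upwards [ae_forall_nonneg hl hmeas hdist,
    ae_tendsto_sum_range_atTop hl hmeas hdist hindep] with ω hY htop (hDh : (Dh T t ω : ℝ) < r)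
  show t < T d ω
  by_contra! hTd
  have : d ≤ Dh T t ω := le_csSup ((hT ω).bddAbove (monotone_sum_range hY) htop hΔ t) ⟨hd, hTd⟩
  have : (d : ℝ) ≤ Dh T t ω := by exact_mod_cast this
  linarith

end Probability

section Rate

variable {l s Δ : ℝ}

lemma exists_rate (hl : 0 < l) {c : ℝ} (hc : c * (Δ + l⁻¹) < 1) :
    ∃ s, 0 < s ∧ s < l ∧ c * (Δ + (l - s)⁻¹) < 1 := by
  have hcont : ContinuousAt (fun s => c * (Δ + (l - s)⁻¹)) 0 := by
    fun_prop (disch := simp [hl.ne'])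
  have hnear : ∀ᶠ s in 𝓝 0, s < l ∧ c * (Δ + (l - s)⁻¹) < 1 :=
    (eventually_lt_nhds hl).and (hcont.eventually_lt continuousAt_const (by simpa using hc))
  obtain ⟨s, ⟨hsl, hrate⟩, hs⟩ :=
    ((hnear.filter_mono nhdsWithin_le_nhds).and (self_mem_nhdsWithin (s := Ioi 0))).exists
  exact ⟨s, hs, hsl, hrate⟩

lemma inv_exp_mul_pow_le (hs : 0 < s) (hsl : s < l) (hΔ : 0 ≤ Δ) {c t : ℝ} {d : ℕ}
    (hd : (d : ℝ) ≤ c * t + 1) :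
    (exp (s * (t + Δ - Δ * d)) * ((l - s) / l) ^ d)⁻¹ ≤
      exp (s * (Δ + (l - s)⁻¹)) * exp (-(s * (1 - c * (Δ + (l - s)⁻¹))) * t) := by
  have hl : 0 < l := hs.trans hsl
  have hls : 0 < l - s := by linarith
  have hq : 0 ≤ s * (Δ + (l - s)⁻¹) := by positivity
  have hρ : ((l - s) / l)⁻¹ ≤ exp (s * (l - s)⁻¹) := by
    rw [inv_div, show l / (l - s) = s * (l - s)⁻¹ + 1 by field_simp; ring]
    exact add_one_le_exp _
  calc (exp (s * (t + Δ - Δ * d)) * ((l - s) / l) ^ d)⁻¹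
      = exp (-(s * (t + Δ - Δ * d))) * (((l - s) / l)⁻¹) ^ d := by
        rw [mul_inv, exp_neg, inv_pow]
    _ ≤ exp (-(s * (t + Δ - Δ * d))) * exp (s * (l - s)⁻¹) ^ d := by gcongr
    _ = exp (d * (s * (Δ + (l - s)⁻¹)) - s * Δ - s * t) := by
        rw [← exp_nat_mul, ← exp_add]
        ring_nf
    _ ≤ exp ((c * t + 1) * (s * (Δ + (l - s)⁻¹)) - s * t) := by
        gcongr exp (?_ - _)
        nlinarith [mul_le_mul_of_nonneg_right hd hq, mul_nonneg hs.le hΔ]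
    _ = _ := by
        rw [← exp_add]
        ring_nf

end Rate

end HonestTree

theorem honest_tree_growth_lower_bound_general
    {Ω : Type*} [MeasurableSpace Ω] (P : Measure Ω)
    (lambda_h : ℝ) (hlh : 0 < lambda_h) (Δ : ℝ) (hΔ : 0 ≤ Δ)
    (Y : ℕ → Ω → ℝ)
    (hmeas : ∀ i, Measurable (Y i))
    (hdist : ∀ i, P.map (Y i) = expMeasure lambda_h)
    (hindep : iIndepFun Y P)
    (T : ℕ → Ω → ℝ)
    (hT1 : ∀ ω, T 1 ω = tau Y 1 ω)
    (hTrec : ∀ d : ℕ, 1 ≤ d → ∀ ω,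
      T (d + 1) ω = sInf {x : ℝ | ∃ i : ℕ, 1 ≤ i ∧ x = tau Y i ω ∧ T d ω + Δ < x})
    (ε : ℝ) (hε0 : 0 < ε) (hε1 : ε < 1) :
    ∃ A : ℝ, 0 < A ∧ ∃ α : ℝ, 0 < α ∧ ∀ t : ℝ, 0 < t →
      P {ω | (Dh T t ω : ℝ) < (1 - ε) * lambda_h * t / (1 + lambda_h * Δ)} ≤
        ENNReal.ofReal (A * Real.exp (-α * t)) := by
  have hT : ∀ ω, IsDepthTimes (tau Y · ω) Δ (T · ω) := fun ω => ⟨hT1 ω, fun d hd => hTrec d hd ω⟩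
  set c := (1 - ε) * lambda_h / (1 + lambda_h * Δ)
  have hden : 0 < 1 + lambda_h * Δ := by positivity
  have hc : 0 < c := div_pos (mul_pos (by linarith) hlh) hden
  have hc_rate : c * (Δ + lambda_h⁻¹) < 1 := by
    rw [show c * (Δ + lambda_h⁻¹) = 1 - ε by simp only [c]; field_simp; ring]
    linarith
  obtain ⟨s, hs, hsl, hrate⟩ := exists_rate hlh hc_rate
  refine ⟨_, exp_pos (s * (Δ + (lambda_h - s)⁻¹)), _, mul_pos hs (sub_pos.2 hrate),
    fun t ht => ?_⟩
  have hd : 1 ≤ ⌈c * t⌉₊ := Nat.ceil_pos.2 (mul_pos hc ht)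
  calc P {ω | (Dh T t ω : ℝ) < (1 - ε) * lambda_h * t / (1 + lambda_h * Δ)}
      ≤ P {ω | t < T ⌈c * t⌉₊ ω} := measure_Dh_lt_le hlh hmeas hdist hindep hT hΔ hd
        (by rw [mul_div_right_comm]; exact Nat.le_ceil _)
    _ ≤ _ := measure_lt_depthTime_le hlh hmeas hdist hindep hT hΔ hd hs hsl t
    _ ≤ _ := ENNReal.ofReal_le_ofReal (inv_exp_mul_pow_le hs hsl hΔ
        (Nat.ceil_lt_add_one (mul_pos hc ht).le).le)

/-- Let `T_1 = τ_1` and `T_{d+1} = min {τ_i : τ_i > T_d + Δ}` be the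
depth-increase times of the fictitious honest tree and `D_h(t)` its depth at time `t`. For
every `ε ∈ (0,1)` there exist `A > 0` and `α > 0` such that for all `t > 0`,
`P(D_h(t) < (1−ε) λ_h t / (1 + λ_h Δ)) ≤ A e^{−α t}`. -/
theorem honest_tree_growth_lower_bound
    {Ω : Type*} [MeasurableSpace Ω] (P : Measure Ω) [IsProbabilityMeasure P]
    (lambda_h : ℝ) (hlh : 0 < lambda_h) (Δ : ℝ) (hΔ : 0 ≤ Δ)
    (Y : ℕ → Ω → ℝ)
    (hmeas : ∀ i, Measurable (Y i))
    (hdist : ∀ i, P.map (Y i) = expMeasure lambda_h)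
    (hindep : iIndepFun Y P)
    (T : ℕ → Ω → ℝ)
    (hT1 : ∀ ω, T 1 ω = tau Y 1 ω)
    (hTrec : ∀ d : ℕ, 1 ≤ d → ∀ ω,
      T (d + 1) ω = sInf {x : ℝ | ∃ i : ℕ, 1 ≤ i ∧ x = tau Y i ω ∧ T d ω + Δ < x})
    (ε : ℝ) (hε0 : 0 < ε) (hε1 : ε < 1) :
    ∃ A : ℝ, 0 < A ∧ ∃ α : ℝ, 0 < α ∧ ∀ t : ℝ, 0 < t →
      P {ω | (Dh T t ω : ℝ) < (1 - ε) * lambda_h * t / (1 + lambda_h * Δ)} ≤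
        ENNReal.ofReal (A * Real.exp (-α * t)) :=
  honest_tree_growth_lower_bound_general P lambda_h hlh Δ hΔ Y hmeas hdist hindep T hT1 hTrec ε hε0
    hε1
end

section
/- Let (ξ_i)_{i≥1} be i.i.d. integrable real-valued random variables with E[ξ_1] > 0. Then the random walk started at 1 with these increments stays strictly positive forever with positive probability: P( for all n ≥ 1, 1 + Σ_{i=1}^{n} ξ_i > 0 ) > 0. -/
/-!
By the strong law of large numbers `S n / n → m := E ξ₀ > 0` almost surely, so the walk
`S n = ∑_{i<n} ξ i` is almost surely bounded below, and some level `c` satisfies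
`P (∀ n, c < S n) > 0`. Choose `K` with `K m ≥ -c`. The event that `ξ 0, …, ξ (K-1)` are all
`≥ m` has positive probability (first moment method), it is independent of the event that the
walk restarted at time `K` stays above `c`, and the latter has probability `P (∀ n, c < S n)`
because the shifted sequence has the same law. On the intersection `S n ≥ 0` for every `n`.
-/

open MeasureTheory ProbabilityTheory Filter Finset

theorem tendsto_atTop_of_tendsto_div_natCast {s : ℕ → ℝ} {m : ℝ} (hm : 0 < m)
    (hs : Tendsto (fun n ↦ s n / n) atTop (nhds m)) : Tendsto s atTop atTop := by
  refine (hs.pos_mul_atTop hm tendsto_natCast_atTop_atTop).congr' ?_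
  filter_upwards [eventually_ne_atTop 0] with n hn
  exact div_mul_cancel₀ _ (Nat.cast_ne_zero.2 hn)

theorem sum_range_nonneg_of_head_tail {x : ℕ → ℝ} {m c : ℝ} {K : ℕ} (hm : 0 ≤ m)
    (hhead : ∀ i : Fin K, m ≤ x i) (hK : -c ≤ K * m)
    (htail : ∀ n, c < ∑ j ∈ range n, x (K + j)) (n : ℕ) :
    0 ≤ ∑ i ∈ range n, x i := by
  rcases le_or_gt n K with hn | hn
  · exact sum_nonneg fun i hi ↦ hm.trans (hhead ⟨i, (mem_range.1 hi).trans_le hn⟩)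
  · obtain ⟨j, rfl⟩ := Nat.exists_eq_add_of_le hn.le
    have hhead_sum : K * m ≤ ∑ i ∈ range K, x i := by
      simpa using card_nsmul_le_sum (range K) x m fun i hi ↦ hhead ⟨i, mem_range.1 hi⟩
    rw [sum_range_add]
    linarith [htail j]

theorem comap_pi_le_iSup {ι κ Ω β : Type*} [mβ : MeasurableSpace β] {X : ι → Ω → β}
    {S : Set ι} (e : κ → ι) (he : ∀ k, e k ∈ S) :
    MeasurableSpace.pi.comap (fun ω k ↦ X (e k) ω) ≤ ⨆ i ∈ S, mβ.comap (X i) := by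
  rw [MeasurableSpace.pi, MeasurableSpace.comap_iSup]
  refine iSup_le fun k ↦ ?_
  rw [MeasurableSpace.comap_comp]
  exact le_iSup₂ (f := fun i (_ : i ∈ S) ↦ mβ.comap (X i)) (e k) (he k)

theorem exists_measure_pos_forall_lt_of_ae_bddBelow {Ω : Type*} [MeasurableSpace Ω]
    {μ : Measure Ω} [NeZero μ] {f : ℕ → Ω → ℝ}
    (hf : ∀ᵐ ω ∂μ, BddBelow (Set.range fun n ↦ f n ω)) :
    ∃ c : ℝ, 0 < μ {ω | ∀ n, c < f n ω} := by
  by_contra! hnull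
  have hbelow : ∀ᵐ ω ∂μ, ∃ k : ℕ, ∀ n, -(k : ℝ) < f n ω := by
    filter_upwards [hf] with ω ⟨b, hb⟩
    obtain ⟨k, hk⟩ := exists_nat_gt (-b)
    exact ⟨k, fun n ↦ by linarith [hb ⟨n, rfl⟩]⟩
  have hnot_below : ∀ᵐ ω ∂μ, ¬ ∃ k : ℕ, ∀ n, -(k : ℝ) < f n ω := by
    simp only [not_exists, ae_all_iff]
    exact fun k ↦ measure_eq_zero_iff_ae_notMem.1 (nonpos_iff_eq_zero.1 (hnull _))
  have : ∀ᵐ _ ∂μ, False := by filter_upwards [hbelow, hnot_below] with ω h h' using h' h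
  exact NeZero.ne μ (ae_eq_bot.1 (eventually_false_iff_eq_bot.1 this))

namespace ProbabilityTheory

theorem ae_tendsto_sum_range_atTop {Ω : Type*} [MeasurableSpace Ω] {μ : Measure Ω}
    {X : ℕ → Ω → ℝ} (hint : Integrable (X 0) μ)
    (hindep : Pairwise (Function.onFun (· ⟂ᵢ[μ] ·) X))
    (hident : ∀ i, IdentDistrib (X i) (X 0) μ μ) (hmean : 0 < ∫ ω, X 0 ω ∂μ) :
    ∀ᵐ ω ∂μ, Tendsto (fun n ↦ ∑ i ∈ range n, X i ω) atTop atTop := by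
  filter_upwards [strong_law_ae_real X hint hindep hident] with ω hω
  exact tendsto_atTop_of_tendsto_div_natCast hmean hω

variable {Ω β : Type*} [MeasurableSpace Ω] [MeasurableSpace β] {P : Measure Ω}

theorem iIndepFun.map_comp_eq_map {ι : Type*} {X : ι → Ω → β} (hX : iIndepFun X P)
    (mX : ∀ i, Measurable (X i)) {g : ι → ι} (hg : Function.Injective g)
    (hident : ∀ i, P.map (X (g i)) = P.map (X i)) :
    P.map (fun ω i ↦ X (g i) ω) = P.map (fun ω i ↦ X i ω) := by
  rw [(hX.precomp hg).map_fun_eq_infinitePi_map (fun i ↦ mX (g i)),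
    hX.map_fun_eq_infinitePi_map mX]
  simp only [hident]

theorem iIndepFun.indepFun_prefix_shift {X : ℕ → Ω → β} (hX : iIndepFun X P)
    (mX : ∀ i, Measurable (X i)) (K : ℕ) :
    (fun ω (i : Fin K) ↦ X i ω) ⟂ᵢ[P] (fun ω i ↦ X (K + i) ω) := by
  have hsup := indep_iSup_of_disjoint (fun i ↦ (mX i).comap_le) hX.iIndep
    (S := Set.Iio K) (T := Set.Ici K)
    (Set.disjoint_left.2 fun _ hi hi' ↦ (Set.mem_Ici.1 hi').not_gt hi)
  rw [IndepFun_iff_Indep]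
  exact indep_of_indep_of_le_right (indep_of_indep_of_le_left hsup
    (comap_pi_le_iSup _ fun i ↦ i.2)) (comap_pi_le_iSup _ fun i ↦ Nat.le_add_right K i)

theorem iIndepFun.measure_preimage_univ_pi_pos {X : ℕ → Ω → β} (hX : iIndepFun X P)
    (mX : ∀ i, Measurable (X i)) (hident : ∀ i, P.map (X i) = P.map (X 0)) {s : Set β}
    (hs : MeasurableSet s) (hpos : 0 < P (X 0 ⁻¹' s)) (K : ℕ) :
    0 < P ((fun ω (i : Fin K) ↦ X i ω) ⁻¹' Set.univ.pi fun _ ↦ s) := by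
  have := hX.isProbabilityMeasure
  have (i : ℕ) : IsProbabilityMeasure (P.map (X i)) :=
    Measure.isProbabilityMeasure_map (mX i).aemeasurable
  rw [← Measure.map_apply (f := fun ω (i : Fin K) ↦ X i ω) (by fun_prop)
      (.univ_pi fun _ ↦ hs),
    (hX.precomp Fin.val_injective).map_fun_eq_pi_map fun i : Fin K ↦ (mX i).aemeasurable,
    Measure.pi_pi]
  simp only [hident, prod_const, card_univ, Fintype.card_fin]
  rw [Measure.map_apply (mX 0) hs]
  exact ENNReal.pow_pos hpos K

end ProbabilityTheory

/-- Let `(ξ_i)_{i ≥ 1}` be i.i.d. integrable real random variables with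
`E[ξ_1] > 0`. Then the random walk started at `1` with these increments stays strictly
positive forever with positive probability:
`P(∀ n ≥ 1, 1 + ∑_{i=1}^n ξ_i > 0) > 0`. -/
theorem random_walk_positive_drift_stays_positive
    {Ω : Type*} [MeasurableSpace Ω] (P : Measure Ω) [IsProbabilityMeasure P]
    (ξ : ℕ → Ω → ℝ)
    (hmeas : ∀ i, Measurable (ξ i))
    (hint : Integrable (ξ 0) P)
    (hdist : ∀ i, P.map (ξ i) = P.map (ξ 0))
    (hindep : iIndepFun ξ P)
    (hmean : 0 < ∫ ω, ξ 0 ω ∂P) :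
    0 < P {ω | ∀ n : ℕ, 1 ≤ n → 0 < 1 + ∑ i ∈ Finset.range n, ξ i ω} := by
  set m := ∫ ω, ξ 0 ω ∂P
  have hbdd : ∀ᵐ ω ∂P, BddBelow (Set.range fun n ↦ ∑ i ∈ range n, ξ i ω) := by
    filter_upwards [ae_tendsto_sum_range_atTop hint (fun i j hij ↦ hindep.indepFun hij)
      (fun i ↦ ⟨(hmeas i).aemeasurable, (hmeas 0).aemeasurable, hdist i⟩) hmean] with ω hω
    exact bddBelow_range_of_tendsto_atTop_atTop hω
  obtain ⟨c, hc⟩ := exists_measure_pos_forall_lt_of_ae_bddBelow hbdd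
  obtain ⟨K, hK⟩ : ∃ K : ℕ, -c ≤ K * m :=
    (exists_nat_ge (-c / m)).imp fun K hK ↦ (div_le_iff₀ hmean).1 hK
  set head := (fun ω (i : Fin K) ↦ ξ i ω) ⁻¹' Set.univ.pi fun _ ↦ Set.Ici m
  set B : Set (ℕ → ℝ) := {x | ∀ n, c < ∑ j ∈ range n, x j}
  have hB : MeasurableSet B := by
    simp only [B, Set.ofPred_forall]
    exact .iInter fun n ↦ measurableSet_lt measurable_const (by fun_prop)
  have hhead : 0 < P head := hindep.measure_preimage_univ_pi_pos hmeas hdist measurableSet_Ici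
    (measure_integral_le_pos hint) K
  have htail : P ((fun ω i ↦ ξ (K + i) ω) ⁻¹' B) = P ((fun ω i ↦ ξ i ω) ⁻¹' B) := by
    rw [← Measure.map_apply (by fun_prop) hB, ← Measure.map_apply (by fun_prop) hB,
      hindep.map_comp_eq_map hmeas (add_right_injective K) fun i ↦ (hdist _).trans (hdist i).symm]
  calc 0 < P head * P ((fun ω i ↦ ξ (K + i) ω) ⁻¹' B) :=
        ENNReal.mul_pos hhead.ne' (htail ▸ hc).ne'
    _ = P (head ∩ (fun ω i ↦ ξ (K + i) ω) ⁻¹' B) :=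
      ((hindep.indepFun_prefix_shift hmeas K).measure_inter_preimage_eq_mul _ _
        (.univ_pi fun _ ↦ measurableSet_Ici) hB).symm
    _ ≤ _ := measure_mono <| by
      rintro ω ⟨hω_head, hω_tail⟩ n -
      have := sum_range_nonneg_of_head_tail (x := fun i ↦ ξ i ω) hmean.le
        (Set.mem_univ_pi.1 hω_head) hK hω_tail n
      linarith
end
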